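/- arXiv:1809.09043 — 6 statements merged into one kernel-verified Lean document; each statement's English description precedes it below -/
import Mathlib

section
/- Let f ∈ ℝ[X₁,…,Xₙ] with deg f ≤ 2d, and let y be an optimal solution of the moment relaxation (P_{2d}), i.e. y is feasible and its objective value equals P*_{2d}. Suppose there exist N ∈ ℕ, points a₁,…,a_N ∈ ℝⁿ and λ₁,…,λ_N > 0 such that M_d(y) = Σᵢ λᵢ V_d(aᵢ)V_d(aᵢ)ᵀ. Then P* = P*_{2d} and each aᵢ is a global minimizer of f, i.e. f(aᵢ) = P* for all i. -/
open MvPolynomial Matrix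

noncomputable section

/-- `Idx n d` is the set `N_d` of exponent multi-indices `α ∈ ℕⁿ` with `|α| ≤ d`. -/
abbrev Idx (n d : ℕ) := {α : Fin n →₀ ℕ // (∑ i, α i) ≤ d}

instance idxFintype (n d : ℕ) : Fintype (Idx n d) :=
  Fintype.ofInjective
    (fun a => (fun i => (⟨a.1 i, Nat.lt_succ_of_le
        (le_trans (Finset.single_le_sum (fun _ _ => Nat.zero_le _) (Finset.mem_univ i)) a.2)⟩ :
        Fin (d + 1))))
    (fun a b h => by
      apply Subtype.ext
      ext i
      exact congrArg Fin.val (congrFun h i))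

/-- The moment matrix `M_d(y)`, indexed by `N_d × N_d`, with entries `y_{α+β}`. -/
def momMat (n d : ℕ) (y : (Fin n →₀ ℕ) → ℝ) : Matrix (Idx n d) (Idx n d) ℝ :=
  Matrix.of fun a b => y (a.1 + b.1)

/-- The vector `V_d(x) = (x^α)_{α ∈ N_d}` of monomials of degree at most `d` at `x`. -/
def monoVec (n d : ℕ) (x : Fin n → ℝ) : Idx n d → ℝ :=
  fun a => ∏ i, x i ^ (a.1 i)

/-- The Riesz functional `L_y(h) = Σ_α h_α y_α`. -/
def riesz {n : ℕ} (y : (Fin n →₀ ℕ) → ℝ) (h : MvPolynomial (Fin n) ℝ) : ℝ :=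
  ∑ α ∈ h.support, h.coeff α * y α

/-- Feasibility for the moment relaxation `(P_k)` : `y_0 = 1` and `M_{⌊k/2⌋}(y) ⪰ 0`. -/
def momFeasible (n k : ℕ) (y : (Fin n →₀ ℕ) → ℝ) : Prop :=
  y 0 = 1 ∧ (momMat n (k / 2) y).PosSemidef

/-- `P*_k`, the optimal value of the moment relaxation `(P_k)`. -/
def momOpt (n k : ℕ) (f : MvPolynomial (Fin n) ℝ) : EReal :=
  sInf {v : EReal | ∃ y, momFeasible n k y ∧ v = (riesz y f : ℝ)}

/-- `P*`, the global infimum of `f` on `ℝⁿ`. -/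
def globalOpt (n : ℕ) (f : MvPolynomial (Fin n) ℝ) : EReal :=
  sInf {v : EReal | ∃ x : Fin n → ℝ, v = (eval x f : ℝ)}

/-!
The decomposition says that `y` agrees, up to degree `2d`, with the moments of the probability
measure `∑ λᵢ δ_{aᵢ}` (the index `α = 0` forces `∑ λᵢ = 1`), so `L_y(f) = ∑ λᵢ f(aᵢ)`. On the other
hand the moments of every Dirac measure `δ_x` are feasible, so `L_y(f) = P*_{2d} ≤ f(x)` for all
`x`. A convex combination with positive weights of values `f(aᵢ) ≥ L_y(f)` can only equal
`L_y(f)` if every `f(aᵢ) = L_y(f)`; hence the `aᵢ` are global minimizers and `P* = P*_{2d}`.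
-/

lemma Finsupp.exists_le_sum_eq {σ : Type*} [Fintype σ] (α : σ →₀ ℕ) {m : ℕ}
    (hm : m ≤ ∑ i, α i) : ∃ β ≤ α, ∑ i, β i = m := by
  induction m with
  | zero => exact ⟨0, zero_le, by simp⟩
  | succ m ih =>
    obtain ⟨β, hβα, hβm⟩ := ih (Nat.le_of_succ_le hm)
    obtain ⟨i, hi⟩ : ∃ i, β i < α i := by
      by_contra! h
      have := Finset.sum_le_sum fun i (_ : i ∈ Finset.univ) => h i
      omega
    refine ⟨β + Finsupp.single i 1, fun j => ?_, ?_⟩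
    · rcases eq_or_ne j i with rfl | hji
      · simpa using hi
      · simpa [Finsupp.single_apply, Ne.symm hji] using hβα j
    · simp [Finset.sum_add_distrib, hβm]

lemma Finsupp.exists_add_eq_of_sum_le_add {σ : Type*} [Fintype σ] (α : σ →₀ ℕ) {p q : ℕ}
    (hα : ∑ i, α i ≤ p + q) :
    ∃ β γ : σ →₀ ℕ, β + γ = α ∧ ∑ i, β i ≤ p ∧ ∑ i, γ i ≤ q := by
  obtain ⟨β, hβα, hβ⟩ := α.exists_le_sum_eq (min_le_left (∑ i, α i) p)
  have hsum : ∑ i, β i + ∑ i, (α - β) i = ∑ i, α i := by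
    rw [← Finset.sum_add_distrib]
    exact Finset.sum_congr rfl fun i _ => by rw [← Finsupp.add_apply, add_tsub_cancel_of_le hβα]
  refine ⟨β, α - β, add_tsub_cancel_of_le hβα, ?_, ?_⟩ <;> omega

lemma MvPolynomial.sum_le_totalDegree_of_mem_support {σ R : Type*} [Fintype σ] [CommSemiring R]
    {p : MvPolynomial σ R} {α : σ →₀ ℕ} (hα : α ∈ p.support) : ∑ i, α i ≤ p.totalDegree := by
  simpa [Finsupp.sum_fintype] using le_totalDegree hα

def diracMoments {n : ℕ} (x : Fin n → ℝ) : (Fin n →₀ ℕ) → ℝ :=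
  fun α => ∏ i, x i ^ α i

lemma momMat_diracMoments (n d : ℕ) (x : Fin n → ℝ) :
    momMat n d (diracMoments x) = vecMulVec (monoVec n d x) (monoVec n d x) := by
  ext β γ
  simp [momMat, diracMoments, monoVec, vecMulVec_apply, pow_add, Finset.prod_mul_distrib]

lemma momFeasible_diracMoments (n k : ℕ) (x : Fin n → ℝ) :
    momFeasible n k (diracMoments x) := by
  refine ⟨by simp [diracMoments], ?_⟩
  rw [momMat_diracMoments]
  simpa using posSemidef_vecMulVec_self_star (monoVec n (k / 2) x)

lemma riesz_diracMoments {n : ℕ} (x : Fin n → ℝ) (h : MvPolynomial (Fin n) ℝ) :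
    riesz (diracMoments x) h = eval x h := by
  rw [eval_eq']
  rfl

lemma momOpt_le_eval (n k : ℕ) (f : MvPolynomial (Fin n) ℝ) (x : Fin n → ℝ) :
    momOpt n k f ≤ ((eval x f : ℝ) : EReal) :=
  sInf_le ⟨diracMoments x, momFeasible_diracMoments n k x, by rw [riesz_diracMoments]⟩

lemma globalOpt_eq_of_forall_le {n : ℕ} {f : MvPolynomial (Fin n) ℝ} {x₀ : Fin n → ℝ}
    (h : ∀ x, eval x₀ f ≤ eval x f) : globalOpt n f = ((eval x₀ f : ℝ) : EReal) :=
  IsGLB.sInf_eq <| IsLeast.isGLB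
    ⟨⟨x₀, rfl⟩, by rintro _ ⟨x, rfl⟩; exact EReal.coe_le_coe (h x)⟩

lemma momMat_sum_smul {ι : Type*} [Fintype ι] (n d : ℕ) (w : ι → ℝ)
    (z : ι → (Fin n →₀ ℕ) → ℝ) :
    momMat n d (∑ i, w i • z i) = ∑ i, w i • momMat n d (z i) := by
  ext β γ
  simp [momMat, Matrix.sum_apply]

lemma apply_eq_of_momMat_eq {n d : ℕ} {y z : (Fin n →₀ ℕ) → ℝ}
    (h : momMat n d y = momMat n d z) {α : Fin n →₀ ℕ} (hα : ∑ i, α i ≤ 2 * d) :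
    y α = z α := by
  obtain ⟨β, γ, rfl, hβ, hγ⟩ := α.exists_add_eq_of_sum_le_add (hα.trans_eq (two_mul d))
  exact congrFun₂ h ⟨β, hβ⟩ ⟨γ, hγ⟩

lemma riesz_congr {n : ℕ} {y z : (Fin n →₀ ℕ) → ℝ} {h : MvPolynomial (Fin n) ℝ}
    (hyz : ∀ α ∈ h.support, y α = z α) : riesz y h = riesz z h :=
  Finset.sum_congr rfl fun α hα => by rw [hyz α hα]

lemma riesz_sum_smul {ι : Type*} [Fintype ι] {n : ℕ} (w : ι → ℝ)
    (z : ι → (Fin n →₀ ℕ) → ℝ) (h : MvPolynomial (Fin n) ℝ) :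
    riesz (∑ i, w i • z i) h = ∑ i, w i * riesz (z i) h := by
  simp only [riesz, Finset.sum_apply, Pi.smul_apply, smul_eq_mul, Finset.mul_sum]
  rw [Finset.sum_comm]
  exact Finset.sum_congr rfl fun _ _ => Finset.sum_congr rfl fun _ _ => by ring

lemma eq_of_sum_mul_eq_of_le {ι : Type*} [Fintype ι] {w v : ι → ℝ} {c : ℝ}
    (hw : ∀ i, 0 < w i) (hw1 : ∑ i, w i = 1) (hv : ∀ i, c ≤ v i)
    (hsum : ∑ i, w i * v i = c) (i : ι) : v i = c := by
  have hzero : ∑ j, w j * (v j - c) = 0 := by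
    simp only [mul_sub, Finset.sum_sub_distrib, ← Finset.sum_mul, hw1, hsum, one_mul, sub_self]
  have hnonneg : ∀ j ∈ Finset.univ, 0 ≤ w j * (v j - c) :=
    fun j _ => mul_nonneg (hw j).le (sub_nonneg.mpr (hv j))
  have hi := (Finset.sum_eq_zero_iff_of_nonneg hnonneg).mp hzero i (Finset.mem_univ i)
  exact sub_eq_zero.mp ((mul_eq_zero.mp hi).resolve_left (hw i).ne')

/-- if an optimal solution `y` of `(P_{2d})` has a moment matrix which is a
positive combination of matrices `V_d(aᵢ)V_d(aᵢ)ᵀ`, then `P* = P*_{2d}` and every `aᵢ` is a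
global minimizer of `f`. -/
theorem optimality_from_decomposition (n d : ℕ) (f : MvPolynomial (Fin n) ℝ)
    (hf : f.totalDegree ≤ 2 * d) (y : (Fin n →₀ ℕ) → ℝ)
    (hfeas : momFeasible n (2 * d) y)
    (hopt : ((riesz y f : ℝ) : EReal) = momOpt n (2 * d) f)
    (N : ℕ) (a : Fin N → (Fin n → ℝ)) (lam : Fin N → ℝ) (hlam : ∀ i, 0 < lam i)
    (hM : momMat n d y =
      ∑ i, lam i • Matrix.vecMulVec (monoVec n d (a i)) (monoVec n d (a i))) :
    globalOpt n f = momOpt n (2 * d) f ∧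
    ∀ i, ((eval (a i) f : ℝ) : EReal) = globalOpt n f := by
  have hy : ∀ α, ∑ i, α i ≤ 2 * d → y α = (∑ i, lam i • diracMoments (a i)) α :=
    fun α => apply_eq_of_momMat_eq (by simp only [hM, momMat_sum_smul, momMat_diracMoments])
  have hlam_sum : ∑ i, lam i = 1 := by
    simpa [diracMoments, hfeas.1] using (hy 0 (by simp)).symm
  have hriesz : riesz y f = ∑ i, lam i * eval (a i) f := by
    rw [riesz_congr fun α hα => hy α ((sum_le_totalDegree_of_mem_support hα).trans hf),
      riesz_sum_smul]
    simp only [riesz_diracMoments]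
  have hlower : ∀ x, riesz y f ≤ eval x f :=
    fun x => EReal.coe_le_coe_iff.mp (hopt ▸ momOpt_le_eval n (2 * d) f x)
  have hmin : ∀ i, eval (a i) f = riesz y f :=
    eq_of_sum_mul_eq_of_le hlam hlam_sum (fun i => hlower (a i)) hriesz.symm
  obtain ⟨i₀, -⟩ := Finset.nonempty_of_sum_ne_zero (hlam_sum ▸ one_ne_zero)
  have hglobal : globalOpt n f = riesz y f := by
    rw [globalOpt_eq_of_forall_le (x₀ := a i₀) fun x => (hmin i₀).symm ▸ hlower x, hmin i₀]
  exact ⟨hglobal.trans hopt, fun i => by rw [hmin i, hglobal]⟩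
end
end

section
/- (Flat extension / extraction of minimizers.) Let d ≥ 1 and let y = (y_α)_{α ∈ N_{2d}} be a real family with y_{(0,…,0)} = 1 such that M_d(y) is positive semidefinite and flat, i.e. rank M_d(y) = rank M_{d-1}(y) =: r (where M_{d-1}(y) is the top-left block of M_d(y) indexed by N_{d-1} × N_{d-1}). Then there exist r distinct points a₁,…,a_r ∈ ℝⁿ and real numbers λ₁,…,λ_r > 0 with Σᵢ λᵢ = 1 such that y_α = Σᵢ λᵢ aᵢ^α for all α ∈ N_{2d}; equivalently M_d(y) = Σᵢ₌₁ʳ λᵢ V_d(aᵢ)V_d(aᵢ)ᵀ. -/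
open MvPolynomial Matrix

noncomputable section

open scoped MatrixOrder in
/-- A positive semidefinite square root (replacement for the removed `PosSemidef.sqrt`). -/
def Matrix.PosSemidef.sqrt {m : Type*} [Fintype m] {A : Matrix m m ℝ} (_ : A.PosSemidef) :
    Matrix m m ℝ := by
  classical
  exact CFC.sqrt A

open scoped MatrixOrder in
lemma Matrix.PosSemidef.posSemidef_sqrt {m : Type*} [Fintype m] {A : Matrix m m ℝ}
    (hA : A.PosSemidef) : hA.sqrt.PosSemidef := by
  classical
  exact (CFC.sqrt_nonneg A).posSemidef

open scoped MatrixOrder in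
lemma Matrix.PosSemidef.sqrt_mul_self {m : Type*} [Fintype m] {A : Matrix m m ℝ}
    (hA : A.PosSemidef) : hA.sqrt * hA.sqrt = A := by
  classical
  exact CFC.sqrt_mul_sqrt_self A hA.nonneg

namespace FlatAux
variable {n : ℕ}
def deg (α : Fin n →₀ ℕ) : ℕ := ∑ i, α i

lemma deg_add (α β : Fin n →₀ ℕ) : deg (α + β) = deg α + deg β := by
  simp [deg, Finsupp.add_apply, Finset.sum_add_distrib]

lemma deg_zero : deg (0 : Fin n →₀ ℕ) = 0 := by simp [deg]

lemma deg_single (j : Fin n) : deg (Finsupp.single j 1) = 1 := by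
  simp [deg, Finsupp.single_apply]

lemma eq_zero_of_deg_eq_zero {α : Fin n →₀ ℕ} (h : deg α = 0) : α = 0 := by
  ext i
  have := Finset.sum_eq_zero_iff.mp h i (Finset.mem_univ i)
  simpa using this

lemma sub_add_single {α : Fin n →₀ ℕ} {j : Fin n} (h : α j ≠ 0) :
    (α - Finsupp.single j 1) + Finsupp.single j 1 = α := by
  ext i
  simp only [Finsupp.add_apply, Finsupp.tsub_apply, Finsupp.single_apply]
  by_cases hij : j = i
  · subst hij; simp; omega
  · simp [hij]

lemma split (d : ℕ) : ∀ m (α : Fin n →₀ ℕ), deg α ≤ d + m →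
    ∃ β γ, α = β + γ ∧ deg β ≤ d ∧ deg γ ≤ m := by
  intro m
  induction m with
  | zero => exact fun α h => ⟨α, 0, by simp, by simpa using h, by simp [deg]⟩
  | succ m ih =>
    intro α h
    by_cases h' : deg α ≤ d + m
    · obtain ⟨β, γ, h1, h2, h3⟩ := ih α h'
      exact ⟨β, γ, h1, h2, h3.trans (Nat.le_succ m)⟩
    · have hne : deg α ≠ 0 := by omega
      obtain ⟨j, _, hj⟩ := Finset.exists_ne_zero_of_sum_ne_zero hne
      have hsub : (α - Finsupp.single j 1) + Finsupp.single j 1 = α := sub_add_single hj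
      have hdeg : deg (α - Finsupp.single j 1) + 1 = deg α := by
        conv_rhs => rw [← hsub]
        rw [deg_add, deg_single]
      obtain ⟨β, γ, h1, h2, h3⟩ := ih (α - Finsupp.single j 1) (by omega)
      refine ⟨β, γ + Finsupp.single j 1, ?_, h2, ?_⟩
      · rw [← add_assoc, ← h1, hsub]
      · rw [deg_add, deg_single]; omega



section Main

variable (n d : ℕ) (y : (Fin n →₀ ℕ) → ℝ) (hpsd : (momMat n d y).PosSemidef)

/-- Gram vectors: columns of the square root of `M_d(y)`. -/
def uvec (α : Fin n →₀ ℕ) : EuclideanSpace ℝ (Idx n d) :=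
  if h : deg α ≤ d then WithLp.toLp 2 (fun b => hpsd.sqrt b ⟨α, h⟩) else 0

lemma sum_mul_uvec {α β : Fin n →₀ ℕ} (hα : deg α ≤ d) (hβ : deg β ≤ d) :
    ∑ c, uvec n d y hpsd α c * uvec n d y hpsd β c = y (α + β) := by
  simp only [uvec, dif_pos hα, dif_pos hβ]
  have h1 : ∀ c : Idx n d, hpsd.sqrt c ⟨α, hα⟩ = hpsd.sqrt ⟨α, hα⟩ c := by
    intro c
    rw [← hpsd.posSemidef_sqrt.1.apply]
    simp
  calc ∑ c, hpsd.sqrt c ⟨α, hα⟩ * hpsd.sqrt c ⟨β, hβ⟩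
      = ∑ c, hpsd.sqrt ⟨α, hα⟩ c * hpsd.sqrt c ⟨β, hβ⟩ := by
        refine Finset.sum_congr rfl fun c _ => by rw [h1 c]
    _ = (hpsd.sqrt * hpsd.sqrt) ⟨α, hα⟩ ⟨β, hβ⟩ := by rw [Matrix.mul_apply]
    _ = y (α + β) := by rw [hpsd.sqrt_mul_self]; rfl

lemma inner_uvec {α β : Fin n →₀ ℕ} (hα : deg α ≤ d) (hβ : deg β ≤ d) :
    (inner ℝ (uvec n d y hpsd α) (uvec n d y hpsd β) : ℝ) = y (α + β) := by
  rw [PiLp.inner_apply]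
  simp only [RCLike.inner_apply, starRingEnd_apply, star_trivial]
  exact (Finset.sum_congr rfl fun c _ => mul_comm _ _).trans (sum_mul_uvec n d y hpsd hα hβ)

lemma finrank_span_uvec (e : ℕ) (he : e ≤ d) :
    Module.finrank ℝ
        (Submodule.span ℝ (Set.range fun b : Idx n e => uvec n d y hpsd b.1)) =
      (momMat n e y).rank := by
  classical
  set B : Matrix (Idx n d) (Idx n e) ℝ :=
    Matrix.of fun c b => uvec n d y hpsd b.1 c with hB
  have h1 : Bᵀ * B = momMat n e y := by
    ext b b'
    rw [Matrix.mul_apply]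
    simp only [hB, Matrix.transpose_apply, Matrix.of_apply]
    exact sum_mul_uvec n d y hpsd (b.2.trans he) (b'.2.trans he)
  have h2 : (momMat n e y).rank = B.rank := by rw [← h1, Matrix.rank_transpose_mul_self]
  rw [h2, Matrix.rank_eq_finrank_span_cols]
  -- identify the two spans via the linear equivalence EuclideanSpace ≃ₗ (Idx n d → ℝ)
  have h3 : Submodule.span ℝ (Set.range B.col) =
      Submodule.map (WithLp.linearEquiv 2 ℝ (Idx n d → ℝ)).toLinearMap
        (Submodule.span ℝ (Set.range fun b : Idx n e => uvec n d y hpsd b.1)) := by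
    rw [Submodule.map_span, ← Set.range_comp]
    rfl

  rw [h3, LinearEquiv.finrank_map_eq]

/-- The span of the Gram vectors of degree `≤ d-1`. -/
def Wspan : Submodule ℝ (EuclideanSpace ℝ (Idx n d)) :=
  Submodule.span ℝ (Set.range fun b : Idx n (d - 1) => uvec n d y hpsd b.1)

variable {n d y}

lemma Wspan_eq (r : ℕ) (hr : (momMat n d y).rank = r) (hflat : (momMat n (d - 1) y).rank = r) :
    Wspan n d y hpsd =
      Submodule.span ℝ (Set.range fun b : Idx n d => uvec n d y hpsd b.1) := by
  apply Submodule.eq_of_le_of_finrank_eq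
  · apply Submodule.span_mono
    rintro x ⟨b, rfl⟩
    exact ⟨⟨b.1, b.2.trans (Nat.sub_le d 1)⟩, rfl⟩
  · rw [Wspan, finrank_span_uvec n d y hpsd (d - 1) (Nat.sub_le d 1),
      finrank_span_uvec n d y hpsd d le_rfl, hflat, hr]

lemma mem_Wspan (r : ℕ) (hr : (momMat n d y).rank = r) (hflat : (momMat n (d - 1) y).rank = r)
    {α : Fin n →₀ ℕ} (hα : deg α ≤ d) :
    uvec n d y hpsd α ∈ Wspan n d y hpsd := by
  rw [Wspan_eq hpsd r hr hflat]
  exact Submodule.subset_span ⟨⟨α, hα⟩, rfl⟩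

lemma finrank_Wspan (r : ℕ) (hflat : (momMat n (d - 1) y).rank = r) :
    Module.finrank ℝ (Wspan n d y hpsd) = r := by
  rw [Wspan, finrank_span_uvec n d y hpsd (d - 1) (Nat.sub_le d 1), hflat]

variable (n d y)

/-- Generators of `Wspan` as elements of the subtype. -/
def gW : Idx n (d - 1) → (Wspan n d y hpsd) := fun b =>
  ⟨uvec n d y hpsd b.1, Submodule.subset_span ⟨b, rfl⟩⟩

lemma span_gW : Submodule.span ℝ (Set.range (gW n d y hpsd)) = ⊤ := by
  apply Submodule.map_injective_of_injective (Wspan n d y hpsd).injective_subtype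
  rw [Submodule.map_span, Submodule.map_top, Submodule.range_subtype, ← Set.range_comp]
  rfl

/-- The linear map sending coefficients to the corresponding combination of generators. -/
def GG : (Idx n (d - 1) → ℝ) →ₗ[ℝ] (Wspan n d y hpsd) :=
  Fintype.linearCombination ℝ (gW n d y hpsd)

lemma GG_surj : LinearMap.range (GG n d y hpsd) = ⊤ := by
  rw [GG, Fintype.range_linearCombination, span_gW]

variable {n d y}

lemma deg_shift (hd : 1 ≤ d) (b : Idx n (d - 1)) (j : Fin n) :
    deg (b.1 + Finsupp.single j 1) ≤ d := by
  have hb := b.2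
  rw [deg_add, deg_single]
  have : deg b.1 = ∑ i, b.1 i := rfl
  omega

variable (hd : 1 ≤ d) (r : ℕ) (hr : (momMat n d y).rank = r)
  (hflat : (momMat n (d - 1) y).rank = r)

/-- The shifted generators `u_{β+e_j}` as elements of `W`. -/
def gWs (j : Fin n) : Idx n (d - 1) → (Wspan n d y hpsd) := fun b =>
  ⟨uvec n d y hpsd (b.1 + Finsupp.single j 1),
    mem_Wspan hpsd r hr hflat (deg_shift hd b j)⟩

def Fj (j : Fin n) : (Idx n (d - 1) → ℝ) →ₗ[ℝ] (Wspan n d y hpsd) :=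
  Fintype.linearCombination ℝ (gWs hpsd hd r hr hflat j)

lemma inner_gW_mem {w : EuclideanSpace ℝ (Idx n d)} (hw : w ∈ Wspan n d y hpsd)
    (h : ∀ γ : Idx n (d - 1), (inner ℝ w (uvec n d y hpsd γ.1) : ℝ) = 0) : w = 0 := by
  have key : ∀ x ∈ Wspan n d y hpsd, (inner ℝ w x : ℝ) = 0 := by
    intro x hx
    induction hx using Submodule.span_induction with
    | mem x hx => obtain ⟨γ, rfl⟩ := hx; exact h γ
    | zero => exact inner_zero_right w
    | add a b _ _ ha hb => rw [inner_add_right, ha, hb, add_zero]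
    | smul t a _ ha => rw [real_inner_smul_right, ha, mul_zero]
  exact inner_self_eq_zero.mp (key w hw)

lemma Fj_eq_zero (j : Fin n) (c : Idx n (d - 1) → ℝ) (hc : GG n d y hpsd c = 0) :
    Fj hpsd hd r hr hflat j c = 0 := by
  have hGc : ((GG n d y hpsd c : Wspan n d y hpsd) : EuclideanSpace ℝ (Idx n d)) = 0 := by
    rw [hc]; rfl
  have hcoeG : ((GG n d y hpsd c : Wspan n d y hpsd) : EuclideanSpace ℝ (Idx n d)) =
      ∑ b, c b • uvec n d y hpsd b.1 := by
    simp [GG, Fintype.linearCombination_apply, gW]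
  have hcoe : ((Fj hpsd hd r hr hflat j c : Wspan n d y hpsd) : EuclideanSpace ℝ (Idx n d)) =
      ∑ b, c b • uvec n d y hpsd (b.1 + Finsupp.single j 1) := by
    simp [Fj, Fintype.linearCombination_apply, gWs]
  have key : ∀ γ : Idx n (d - 1),
      (inner ℝ ((Fj hpsd hd r hr hflat j c : Wspan n d y hpsd) : EuclideanSpace ℝ (Idx n d))
        (uvec n d y hpsd γ.1) : ℝ) = 0 := by
    intro γ
    rw [hcoe, sum_inner]
    have step : ∀ b : Idx n (d - 1),
        (inner ℝ (c b • uvec n d y hpsd (b.1 + Finsupp.single j 1))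
          (uvec n d y hpsd γ.1) : ℝ) =
        (inner ℝ (c b • uvec n d y hpsd b.1)
          (uvec n d y hpsd (γ.1 + Finsupp.single j 1)) : ℝ) := by
      intro b
      rw [real_inner_smul_left, real_inner_smul_left,
        inner_uvec n d y hpsd (deg_shift hd b j) (γ.2.trans (Nat.sub_le d 1)),
        inner_uvec n d y hpsd (b.2.trans (Nat.sub_le d 1)) (deg_shift hd γ j)]
      congr 2
      abel
    rw [Finset.sum_congr rfl fun b _ => step b, ← sum_inner, ← hcoeG, hGc, inner_zero_left]
  have := inner_gW_mem hpsd (Fj hpsd hd r hr hflat j c).2 key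
  exact Subtype.ext this

/-- A linear right inverse of `GG`. -/
def Hright : (Wspan n d y hpsd) →ₗ[ℝ] (Idx n (d - 1) → ℝ) :=
  Classical.choose
    ((GG n d y hpsd).exists_rightInverse_of_surjective (GG_surj n d y hpsd))

lemma Hright_spec (w : Wspan n d y hpsd) : GG n d y hpsd (Hright hpsd w) = w := by
  have := Classical.choose_spec
    ((GG n d y hpsd).exists_rightInverse_of_surjective (GG_surj n d y hpsd))
  exact DFunLike.congr_fun this w

/-- The multiplication-by-`x_j` operator on `W`. -/
def XOp (j : Fin n) : (Wspan n d y hpsd) →ₗ[ℝ] (Wspan n d y hpsd) :=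
  (Fj hpsd hd r hr hflat j).comp (Hright hpsd)

lemma XOp_GG (j : Fin n) (c : Idx n (d - 1) → ℝ) :
    XOp hpsd hd r hr hflat j (GG n d y hpsd c) = Fj hpsd hd r hr hflat j c := by
  have h1 : GG n d y hpsd (Hright hpsd (GG n d y hpsd c) - c) = 0 := by
    rw [map_sub, Hright_spec, sub_self]
  have h2 := Fj_eq_zero hpsd hd r hr hflat j _ h1
  rw [map_sub, sub_eq_zero] at h2
  exact h2

lemma XOp_gW (j : Fin n) (b : Idx n (d - 1)) :
    XOp hpsd hd r hr hflat j (gW n d y hpsd b) = gWs hpsd hd r hr hflat j b := by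
  have h1 : GG n d y hpsd (Pi.single b 1) = gW n d y hpsd b := by
    simp [GG, Fintype.linearCombination_apply, Pi.single_apply]
  have h2 : Fj hpsd hd r hr hflat j (Pi.single b 1) = gWs hpsd hd r hr hflat j b := by
    simp [Fj, Fintype.linearCombination_apply, Pi.single_apply]
  rw [← h1, XOp_GG, h2]

lemma inner_XOp (j : Fin n) (w : Wspan n d y hpsd) (γ : Idx n (d - 1)) :
    (inner ℝ ((XOp hpsd hd r hr hflat j w : Wspan n d y hpsd) : EuclideanSpace ℝ (Idx n d))
      (uvec n d y hpsd γ.1) : ℝ) =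
    (inner ℝ (w : EuclideanSpace ℝ (Idx n d))
      (uvec n d y hpsd (γ.1 + Finsupp.single j 1)) : ℝ) := by
  have hw : w ∈ Submodule.span ℝ (Set.range (gW n d y hpsd)) := by
    rw [span_gW]; trivial
  induction hw using Submodule.span_induction with
  | mem x hx =>
    obtain ⟨b, rfl⟩ := hx
    rw [XOp_gW]
    show (inner ℝ (uvec n d y hpsd (b.1 + Finsupp.single j 1)) (uvec n d y hpsd γ.1) : ℝ) =
      (inner ℝ (uvec n d y hpsd b.1) (uvec n d y hpsd (γ.1 + Finsupp.single j 1)) : ℝ)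
    rw [inner_uvec n d y hpsd (deg_shift hd b j) (γ.2.trans (Nat.sub_le d 1)),
      inner_uvec n d y hpsd (b.2.trans (Nat.sub_le d 1)) (deg_shift hd γ j)]
    congr 1
    abel
  | zero => simp
  | add a b _ _ ha hb =>
    rw [map_add, Submodule.coe_add, Submodule.coe_add, inner_add_left, inner_add_left, ha, hb]
  | smul t a _ ha =>
    rw [_root_.map_smul, Submodule.coe_smul, Submodule.coe_smul, real_inner_smul_left,
      real_inner_smul_left, ha]

lemma XOp_isSymmetric (j : Fin n) : (XOp hpsd hd r hr hflat j).IsSymmetric := by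
  intro v w
  have hw : w ∈ Submodule.span ℝ (Set.range (gW n d y hpsd)) := by
    rw [span_gW]; trivial
  induction hw using Submodule.span_induction with
  | mem x hx =>
    obtain ⟨b, rfl⟩ := hx
    rw [XOp_gW]
    exact inner_XOp hpsd hd r hr hflat j v b
  | zero => simp
  | add a b _ _ ha hb => rw [inner_add_right, map_add, inner_add_right, ha, hb]
  | smul t a _ ha =>
    rw [_root_.map_smul, real_inner_smul_right, ha]
    exact (real_inner_smul_right _ _ _).symm

lemma XOp_ext_zero (T : (Wspan n d y hpsd) →ₗ[ℝ] (Wspan n d y hpsd))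
    (h : ∀ b γ : Idx n (d - 1),
      (inner ℝ ((T (gW n d y hpsd b) : Wspan n d y hpsd) : EuclideanSpace ℝ (Idx n d))
        (uvec n d y hpsd γ.1) : ℝ) = 0) : T = 0 := by
  have h1 : ∀ b : Idx n (d - 1), T (gW n d y hpsd b) = 0 := by
    intro b
    have := inner_gW_mem hpsd (T (gW n d y hpsd b)).2 (h b)
    exact Subtype.ext this
  refine LinearMap.ext fun w => ?_
  show T w = 0
  have hw : w ∈ Submodule.span ℝ (Set.range (gW n d y hpsd)) := by
    rw [span_gW]; trivial
  induction hw using Submodule.span_induction with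
  | mem x hx => obtain ⟨b, rfl⟩ := hx; exact h1 b
  | zero => simp
  | add a b _ _ ha hb => rw [map_add, ha, hb, add_zero]
  | smul t a _ ha => rw [_root_.map_smul, ha, smul_zero]

lemma XOp_comm (j k : Fin n) :
    XOp hpsd hd r hr hflat j ∘ₗ XOp hpsd hd r hr hflat k =
    XOp hpsd hd r hr hflat k ∘ₗ XOp hpsd hd r hr hflat j := by
  rw [← sub_eq_zero]
  apply XOp_ext_zero
  intro b γ
  have key : ∀ j' k' : Fin n,
      (inner ℝ ((XOp hpsd hd r hr hflat j' (XOp hpsd hd r hr hflat k' (gW n d y hpsd b)) :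
        Wspan n d y hpsd) : EuclideanSpace ℝ (Idx n d)) (uvec n d y hpsd γ.1) : ℝ) =
      y (b.1 + γ.1 + Finsupp.single j' 1 + Finsupp.single k' 1) := by
    intro j' k'
    rw [inner_XOp, XOp_gW]
    show (inner ℝ (uvec n d y hpsd (b.1 + Finsupp.single k' 1))
      (uvec n d y hpsd (γ.1 + Finsupp.single j' 1)) : ℝ) = _
    rw [inner_uvec n d y hpsd (deg_shift hd b k') (deg_shift hd γ j')]
    congr 1
    abel
  rw [LinearMap.sub_apply, Submodule.coe_sub, inner_sub_left, LinearMap.comp_apply,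
    LinearMap.comp_apply, key j k, key k j, sub_eq_zero]
  congr 1
  abel

end Main
end FlatAux

open Module in

set_option maxHeartbeats 1000000 in
lemma jointly_diagonalize {E : Type*} [NormedAddCommGroup E] [InnerProductSpace ℝ E]
    [FiniteDimensional ℝ E] {r n : ℕ} (hn : Module.finrank ℝ E = r)
    (X : Fin n → Module.End ℝ E) (hSym : ∀ j, (X j).IsSymmetric)
    (hComm : Pairwise (Function.onFun Commute X)) :
    ∃ (bas : OrthonormalBasis (Fin r) ℝ E) (aE : Fin r → Fin n → ℝ),
      ∀ i j, X j (bas i) = aE i j • bas i := by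
  classical
  let V : (Fin n → ℝ) → Submodule ℝ E :=
    fun χ => ⨅ j, Module.End.eigenspace (X j) (χ j)
  have hOrth : OrthogonalFamily ℝ (fun χ => (V χ : Submodule ℝ E))
      (fun χ => (V χ).subtypeₗᵢ) :=
    LinearMap.IsSymmetric.orthogonalFamily_iInf_eigenspaces hSym
  have hTop : (⨆ χ, V χ) = ⊤ := LinearMap.IsSymmetric.iSup_iInf_eq_top_of_commute hSym hComm
  letI : Fintype {χ : Fin n → ℝ // V χ ≠ ⊥} :=
    (hOrth.independent).fintypeNeBotOfFiniteDimensional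
  have hOrth' : OrthogonalFamily ℝ (fun s : {χ : Fin n → ℝ // V χ ≠ ⊥} => V s.1)
      (fun s => (V s.1).subtypeₗᵢ) := hOrth.comp Subtype.val_injective
  have hsup' : (⨆ s : {χ : Fin n → ℝ // V χ ≠ ⊥}, V s.1) = ⊤ := by
    rw [← hTop, iSup_subtype]
    refine iSup_congr fun χ => ?_
    by_cases h : V χ = ⊥
    · simp [h]
    · simp [h]
  have hInternal : DirectSum.IsInternal (fun s : {χ : Fin n → ℝ // V χ ≠ ⊥} => V s.1) := by
    rw [hOrth'.isInternal_iff, hsup', Submodule.top_orthogonal_eq_bot]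
  refine ⟨hInternal.subordinateOrthonormalBasis hn hOrth',
    fun i => (hInternal.subordinateOrthonormalBasisIndex hn i hOrth').1, fun i j => ?_⟩
  have hmem := hInternal.subordinateOrthonormalBasis_subordinate hn i hOrth'
  simp only [V, Submodule.mem_iInf] at hmem
  exact Module.End.mem_eigenspace_iff.mp (hmem j)

/-- flat extension / extraction of minimizers: if `y_0 = 1`, `M_d(y)` is
positive semidefinite and flat with `rank M_d(y) = rank M_{d-1}(y) = r`, then there exist `r`
distinct points `a₁,…,a_r ∈ ℝⁿ` and weights `λᵢ > 0` summing to `1` such that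
`y_α = Σᵢ λᵢ aᵢ^α` for all `|α| ≤ 2d`, equivalently `M_d(y) = Σᵢ λᵢ V_d(aᵢ)V_d(aᵢ)ᵀ`. -/

theorem flat_extension (n d : ℕ) (hd : 1 ≤ d) (y : (Fin n →₀ ℕ) → ℝ)
    (h0 : y 0 = 1) (hpsd : (momMat n d y).PosSemidef)
    (r : ℕ) (hr : (momMat n d y).rank = r) (hflat : (momMat n (d - 1) y).rank = r) :
    ∃ (a : Fin r → (Fin n → ℝ)) (lam : Fin r → ℝ),
      Function.Injective a ∧ (∀ i, 0 < lam i) ∧ (∑ i, lam i = 1) ∧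
      (∀ α : Fin n →₀ ℕ, (∑ i, α i) ≤ 2 * d → y α = ∑ i, lam i * ∏ j, a i j ^ α j) ∧
      momMat n d y =
        ∑ i, lam i • Matrix.vecMulVec (monoVec n d (a i)) (monoVec n d (a i)) := by
  classical
  let X : Fin n → Module.End ℝ (FlatAux.Wspan n d y hpsd) :=
    fun j => FlatAux.XOp hpsd hd r hr hflat j
  have hSym : ∀ j, (X j).IsSymmetric := fun j => FlatAux.XOp_isSymmetric hpsd hd r hr hflat j
  have hComm : Pairwise (Function.onFun Commute X) := by
    intro j k _
    show X j * X k = X k * X j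
    rw [Module.End.mul_eq_comp, Module.End.mul_eq_comp]
    exact FlatAux.XOp_comm hpsd hd r hr hflat j k
  have hn : Module.finrank ℝ (FlatAux.Wspan n d y hpsd) = r :=
    FlatAux.finrank_Wspan hpsd r hflat
  obtain ⟨bas, aE, hEig⟩ := jointly_diagonalize hn X hSym hComm
  have hdz : FlatAux.deg (0 : Fin n →₀ ℕ) ≤ d := by
    rw [FlatAux.deg_zero]; exact Nat.zero_le d
  let uW : ∀ (β : Fin n →₀ ℕ), FlatAux.deg β ≤ d → (FlatAux.Wspan n d y hpsd) :=
    fun β hβ => ⟨FlatAux.uvec n d y hpsd β, FlatAux.mem_Wspan hpsd r hr hflat hβ⟩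
  let cc : Fin r → ℝ := fun i => (inner ℝ (bas i) (uW 0 hdz) : ℝ)
  -- Key eigen-recursion: ⟪bas i, u_β⟫ = aE i ^ β * cc i
  have hC : ∀ (m : ℕ) (β : Fin n →₀ ℕ), FlatAux.deg β = m → ∀ (hβ : FlatAux.deg β ≤ d),
      ∀ i : Fin r, (inner ℝ (bas i) (uW β hβ) : ℝ) = (∏ j, aE i j ^ β j) * cc i := by
    intro m
    induction m with
    | zero =>
      intro β h0' hβ i
      have hβ0 : β = 0 := FlatAux.eq_zero_of_deg_eq_zero h0'
      subst hβ0
      simp only [Finsupp.coe_zero, Pi.zero_apply, pow_zero, Finset.prod_const_one, one_mul]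
      rfl
    | succ m ih =>
      intro β hm hβd i
      have hne : FlatAux.deg β ≠ 0 := by omega
      obtain ⟨j, -, hj⟩ := Finset.exists_ne_zero_of_sum_ne_zero hne
      have hsub : (β - Finsupp.single j 1) + Finsupp.single j 1 = β := FlatAux.sub_add_single hj
      set γ := β - Finsupp.single j 1 with hγdef
      have hdγ : FlatAux.deg γ = m := by
        have h1 := FlatAux.deg_add γ (Finsupp.single j 1)
        rw [hsub, FlatAux.deg_single] at h1
        omega
      have hγd1 : FlatAux.deg γ ≤ d - 1 := by omega
      have hγd : FlatAux.deg γ ≤ d := hγd1.trans (Nat.sub_le d 1)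
      have huβ : uW β hβd = X j (FlatAux.gW n d y hpsd ⟨γ, hγd1⟩) := by
        rw [show X j = FlatAux.XOp hpsd hd r hr hflat j from rfl,
          FlatAux.XOp_gW hpsd hd r hr hflat j ⟨γ, hγd1⟩]
        apply Subtype.ext
        show FlatAux.uvec n d y hpsd β = FlatAux.uvec n d y hpsd (γ + Finsupp.single j 1)
        rw [hsub]
      have hgWγ : FlatAux.gW n d y hpsd ⟨γ, hγd1⟩ = uW γ hγd := Subtype.ext rfl
      rw [huβ, ← hSym j (bas i), hEig i j, real_inner_smul_left, hgWγ, ih γ hdγ hγd i]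
      have hprod : ∏ l, aE i l ^ β l = (∏ l, aE i l ^ γ l) * aE i j := by
        conv_lhs => rw [← hsub]
        simp only [Finsupp.add_apply, pow_add, Finset.prod_mul_distrib]
        congr 1
        simp [Finsupp.single_apply, pow_ite, pow_one, pow_zero, Finset.prod_ite_eq]
      rw [hprod]
      ring
  -- Moment representation with the joint eigenvalues
  have hM : ∀ (α : Fin n →₀ ℕ), FlatAux.deg α ≤ 2 * d →
      y α = ∑ i, (cc i * cc i) * ∏ j, aE i j ^ α j := by
    intro α hα
    rw [two_mul] at hα
    obtain ⟨β, γ, rfl, hβ, hγ⟩ := FlatAux.split d d α hα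
    have hyv : (inner ℝ (uW β hβ) (uW γ hγ) : ℝ) = y (β + γ) :=
      FlatAux.inner_uvec n d y hpsd hβ hγ
    have hP := bas.sum_inner_mul_inner (uW β hβ) (uW γ hγ)
    rw [← hyv, ← hP]
    refine Finset.sum_congr rfl fun i _ => ?_
    have e1 : (inner ℝ (uW β hβ) (bas i) : ℝ) = (∏ j, aE i j ^ β j) * cc i := by
      rw [real_inner_comm]
      exact hC (FlatAux.deg β) β rfl hβ i
    have e2 : (inner ℝ (bas i) (uW γ hγ) : ℝ) = (∏ j, aE i j ^ γ j) * cc i :=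
      hC (FlatAux.deg γ) γ rfl hγ i
    rw [e1, e2]
    have hsplit : ∏ j, aE i j ^ (β + γ) j = (∏ j, aE i j ^ β j) * (∏ j, aE i j ^ γ j) := by
      rw [← Finset.prod_mul_distrib]
      refine Finset.prod_congr rfl fun j _ => ?_
      rw [Finsupp.add_apply, pow_add]
    rw [hsplit]
    ring
  -- Group equal atoms together and drop zero weights
  set μf : (Fin n → ℝ) → ℝ :=
    fun x => ∑ i ∈ Finset.univ.filter (fun i => aE i = x), cc i * cc i with hμf
  have hμ0 : ∀ x, 0 ≤ μf x := fun x => Finset.sum_nonneg fun i _ => mul_self_nonneg (cc i)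
  set T0 : Finset (Fin n → ℝ) := (Finset.univ.image aE).filter (fun x => μf x ≠ 0) with hT0
  have hgroup : ∀ F : (Fin n → ℝ) → ℝ,
      ∑ i, (cc i * cc i) * F (aE i) = ∑ x ∈ T0, μf x * F x := by
    intro F
    calc ∑ i, (cc i * cc i) * F (aE i)
        = ∑ x ∈ Finset.univ.image aE, ∑ i ∈ Finset.univ.filter (fun i => aE i = x),
            (cc i * cc i) * F (aE i) :=
          (Finset.sum_fiberwise_of_maps_to
            (fun i _ => Finset.mem_image_of_mem aE (Finset.mem_univ i)) _).symm
      _ = ∑ x ∈ Finset.univ.image aE, μf x * F x := by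
          refine Finset.sum_congr rfl fun x _ => ?_
          have hμx : μf x = ∑ i ∈ Finset.univ.filter (fun i => aE i = x), cc i * cc i := rfl
          rw [hμx, Finset.sum_mul]
          refine Finset.sum_congr rfl fun i hi => ?_
          rw [(Finset.mem_filter.mp hi).2]
      _ = ∑ x ∈ T0, μf x * F x := by
          rw [hT0]
          refine (Finset.sum_filter_of_ne ?_).symm
          intro x _ hne h0'
          exact hne (by rw [h0', zero_mul])
  have hrep : ∀ (α : Fin n →₀ ℕ), FlatAux.deg α ≤ 2 * d →
      y α = ∑ x ∈ T0, μf x * ∏ j, x j ^ α j := fun α hα =>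
    (hM α hα).trans (hgroup (fun x => ∏ j, x j ^ α j))
  -- Rank bound forces exactly r atoms
  set C : Matrix (Idx n d) {x // x ∈ T0} ℝ :=
    Matrix.of (fun a (x : {x // x ∈ T0}) => Real.sqrt (μf x.1) * ∏ j, x.1 j ^ a.1 j) with hC2
  have hdeg2 : ∀ (a b : Idx n d), FlatAux.deg (a.1 + b.1) ≤ 2 * d := by
    intro a b
    have h1 := a.2
    have h2 := b.2
    have h3 : FlatAux.deg a.1 = ∑ i, a.1 i := rfl
    have h4 : FlatAux.deg b.1 = ∑ i, b.1 i := rfl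
    rw [FlatAux.deg_add]
    omega
  have hCC : C * Cᵀ = momMat n d y := by
    ext a b
    rw [Matrix.mul_apply]
    have hterm : ∀ x : {x // x ∈ T0},
        C a x * Cᵀ x b = μf x.1 * ∏ j, x.1 j ^ (a.1 + b.1) j := by
      intro x
      simp only [hC2, Matrix.transpose_apply, Matrix.of_apply]
      have h1 : Real.sqrt (μf x.1) * Real.sqrt (μf x.1) = μf x.1 :=
        Real.mul_self_sqrt (hμ0 x.1)
      have h2 : ∏ j, x.1 j ^ (a.1 + b.1) j = (∏ j, x.1 j ^ a.1 j) * (∏ j, x.1 j ^ b.1 j) := by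
        rw [← Finset.prod_mul_distrib]
        refine Finset.prod_congr rfl fun j _ => ?_
        rw [Finsupp.add_apply, pow_add]
      rw [h2, mul_mul_mul_comm, h1]
    rw [Finset.sum_congr rfl fun x _ => hterm x]
    show _ = y (a.1 + b.1)
    rw [Finset.sum_coe_sort T0 (fun x => μf x * ∏ j, x j ^ (a.1 + b.1) j)]
    exact (hrep _ (hdeg2 a b)).symm
  have hrank1 : r ≤ T0.card := by
    have h1 : (momMat n d y).rank ≤ C.rank := by
      rw [← hCC]
      exact (Matrix.rank_mul_le C Cᵀ).trans (min_le_left _ _)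
    have h2 : C.rank ≤ Fintype.card {x // x ∈ T0} := Matrix.rank_le_card_width C
    have h3 := (hr ▸ h1).trans h2
    rwa [Fintype.card_coe] at h3
  have hrank2 : T0.card ≤ r := by
    calc T0.card ≤ (Finset.univ.image aE).card := Finset.card_filter_le _ _
      _ ≤ (Finset.univ : Finset (Fin r)).card := Finset.card_image_le
      _ = r := by simp
  have hcard : Fintype.card {x // x ∈ T0} = r := by
    rw [Fintype.card_coe]; exact le_antisymm hrank2 hrank1
  let e : {x // x ∈ T0} ≃ Fin r := Fintype.equivFinOfCardEq hcard
  have htrans : ∀ F : (Fin n → ℝ) → ℝ,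
      ∑ x ∈ T0, μf x * F x = ∑ i, μf ((e.symm i).1) * F ((e.symm i).1) := by
    intro F
    rw [← Finset.sum_coe_sort T0 (fun x => μf x * F x)]
    exact (Equiv.sum_comp e.symm fun s => μf s.1 * F s.1).symm
  refine ⟨fun i => (e.symm i).1, fun i => μf ((e.symm i).1), ?_, ?_, ?_, ?_, ?_⟩
  · intro i i' h
    exact e.symm.injective (Subtype.coe_injective h)
  · intro i
    have hmem : ((e.symm i : {x // x ∈ T0}) : Fin n → ℝ) ∈
        (Finset.univ.image aE).filter (fun x => μf x ≠ 0) := (e.symm i).2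
    exact lt_of_le_of_ne (hμ0 _) (Ne.symm (Finset.mem_filter.mp hmem).2)
  · have h1 : y 0 = ∑ x ∈ T0, μf x * ∏ j, x j ^ (0 : Fin n →₀ ℕ) j :=
      hrep 0 (by rw [FlatAux.deg_zero]; exact Nat.zero_le _)
    simp only [Finsupp.coe_zero, Pi.zero_apply, pow_zero, Finset.prod_const_one,
      mul_one] at h1
    have h2 := htrans (fun _ => 1)
    simp only [mul_one] at h2
    rw [← h2, ← h1, h0]
  · intro α hα
    have : FlatAux.deg α ≤ 2 * d := hα
    rw [hrep α this, htrans (fun x => ∏ j, x j ^ α j)]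
  · ext a b
    have h1 : momMat n d y a b = y (a.1 + b.1) := rfl
    rw [h1, hrep _ (hdeg2 a b), htrans (fun x => ∏ j, x j ^ (a.1 + b.1) j)]
    rw [Matrix.sum_apply]
    refine Finset.sum_congr rfl fun i _ => ?_
    rw [Matrix.smul_apply, Matrix.vecMulVec_apply]
    show μf ((e.symm i).1) * ∏ j, (e.symm i).1 j ^ (a.1 + b.1) j =
      μf ((e.symm i).1) * ((∏ j, (e.symm i).1 j ^ a.1 j) * ∏ j, (e.symm i).1 j ^ b.1 j)
    congr 1
    rw [← Finset.prod_mul_distrib]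
    refine Finset.prod_congr rfl fun j _ => ?_
    rw [Finsupp.add_apply, pow_add]
end
end

section
/- Let f ∈ ℝ[X₁,…,Xₙ] with deg f ≤ 2d, d ≥ 1, and let y be an optimal solution of the moment relaxation (P_{2d}) (feasible with objective value equal to P*_{2d}) such that M_d(y) is flat, i.e. rank M_d(y) = rank M_{d-1}(y). Then P* = P*_{2d}, and there exist r ∈ ℕ, λ₁,…,λ_r > 0 and a₁,…,a_r ∈ ℝⁿ such that M_d(y) = Σᵢ₌₁ʳ λᵢ V_d(aᵢ)V_d(aᵢ)ᵀ and each aᵢ is a global minimizer of f (f(aᵢ) = P* for all i). -/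
open MvPolynomial Matrix

noncomputable section

-- piece 1: utilities
section Aux
variable {n : ℕ}

lemma finsupp_split (d : ℕ) (γ : Fin n →₀ ℕ) (h : (∑ i, γ i) ≤ 2 * d) :
    ∃ α β : Fin n →₀ ℕ, (∑ i, α i) ≤ d ∧ (∑ i, β i) ≤ d ∧ α + β = γ := by
  suffices H : ∀ m (γ : Fin n →₀ ℕ), (∑ i, γ i) = m → m ≤ 2 * d →
      ∃ α β : Fin n →₀ ℕ, (∑ i, α i) ≤ d ∧ (∑ i, β i) ≤ d ∧ α + β = γ from
    H _ γ rfl h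
  intro m
  induction m with
  | zero => intro γ hγ _; exact ⟨γ, 0, by omega, by simp, by simp⟩
  | succ m ih =>
    intro γ hγ hm
    by_cases hmd : m + 1 ≤ d
    · exact ⟨γ, 0, by omega, by simp, by simp⟩
    · have : ∃ i, γ i ≠ 0 := by
        by_contra hc
        push_neg at hc
        simp [hc] at hγ
      obtain ⟨i, hi⟩ := this
      set γ' := γ - Finsupp.single i 1 with hγ'
      have hadd : γ' + Finsupp.single i 1 = γ := by
        ext j
        simp only [hγ', Finsupp.add_apply, Finsupp.tsub_apply, Finsupp.single_apply]
        rcases eq_or_ne i j with rfl | hij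
        · simp only [if_true, eq_self_iff_true]
          omega
        · simp [hij]
      have hsum : (∑ j, γ' j) = m := by
        have := congrArg (fun t : Fin n →₀ ℕ => ∑ j, t j) hadd
        simp only [Finsupp.add_apply, Finset.sum_add_distrib] at this
        have h1 : (∑ j, (Finsupp.single i 1 : Fin n →₀ ℕ) j) = 1 := by
          simp [Finsupp.single_apply]
        omega
      obtain ⟨α, β, hα, hβ, hab⟩ := ih γ' hsum (by omega)
      have habsum : (∑ j, α j) + (∑ j, β j) = m := by
        have h2 := congrArg (fun t : Fin n →₀ ℕ => ∑ j, t j) hab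
        simp only [Finsupp.add_apply, Finset.sum_add_distrib] at h2
        omega
      by_cases hroom : (∑ j, α j) < d
      · refine ⟨α + Finsupp.single i 1, β, ?_, hβ, ?_⟩
        · simp [Finsupp.add_apply, Finset.sum_add_distrib, Finsupp.single_apply]
          omega
        · rw [add_right_comm, hab, hadd]
      · refine ⟨α, β + Finsupp.single i 1, hα, ?_, ?_⟩
        · simp [Finsupp.add_apply, Finset.sum_add_distrib, Finsupp.single_apply]
          omega
        · rw [← add_assoc, hab, hadd]

end Aux
section Aux2

lemma vecMulVec_posSemidef {m : Type*} [Fintype m] (v : m → ℝ) :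
    (Matrix.vecMulVec v v).PosSemidef := by
  rw [Matrix.posSemidef_iff_dotProduct_mulVec]
  constructor
  · ext a b
    simp [Matrix.vecMulVec_apply, Matrix.conjTranspose_apply, mul_comm]
  · intro x
    have : (star x) ⬝ᵥ (Matrix.vecMulVec v v) *ᵥ x = (v ⬝ᵥ x) * (v ⬝ᵥ x) := by
      simp only [dotProduct, Matrix.mulVec, Matrix.vecMulVec_apply, star_trivial,
        Finset.sum_mul, Finset.mul_sum]
      rw [Finset.sum_comm]
      apply Finset.sum_congr rfl
      intro a _
      apply Finset.sum_congr rfl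
      intro b _
      ring
    rw [this]
    exact mul_self_nonneg _

lemma momMat_point (n d : ℕ) (x : Fin n → ℝ) :
    momMat n d (fun γ => ∏ i, x i ^ γ i) =
      Matrix.vecMulVec (monoVec n d x) (monoVec n d x) := by
  ext a b
  simp only [momMat, Matrix.of_apply, Matrix.vecMulVec_apply, monoVec]
  rw [← Finset.prod_mul_distrib]
  exact Finset.prod_congr rfl fun i _ => by rw [Finsupp.add_apply, pow_add]

lemma momFeasible_point (n d : ℕ) (x : Fin n → ℝ) :
    momFeasible n (2 * d) (fun γ => ∏ i, x i ^ γ i) := by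
  constructor
  · simp
  · have h2 : 2 * d / 2 = d := by omega
    rw [h2, momMat_point]
    exact vecMulVec_posSemidef _

lemma riesz_point (n : ℕ) (f : MvPolynomial (Fin n) ℝ) (x : Fin n → ℝ) :
    riesz (fun γ => ∏ i, x i ^ γ i) f = eval x f := by
  rw [riesz, eval_eq']

lemma momOpt_le_globalOpt (n d : ℕ) (f : MvPolynomial (Fin n) ℝ) :
    momOpt n (2 * d) f ≤ globalOpt n f := by
  apply sInf_le_sInf
  rintro v ⟨x, rfl⟩
  exact ⟨fun γ => ∏ i, x i ^ γ i, momFeasible_point n d x, by rw [riesz_point]⟩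

end Aux2
section Atoms

open scoped RealInnerProductSpace
open scoped MatrixOrder

variable {n d : ℕ}

/-- inclusion N_{d-1} into N_d -/
def idxIncl (n d : ℕ) (a : Idx n (d - 1)) : Idx n d :=
  ⟨a.1, a.2.trans (Nat.sub_le d 1)⟩

lemma sum_single_one (i : Fin n) : (∑ j, (Finsupp.single i 1 : Fin n →₀ ℕ) j) = 1 := by
  simp [Finsupp.single_apply]

/-- shift by one in coordinate i, mapping N_{d-1} to N_d -/
def idxShift (hd : 1 ≤ d) (i : Fin n) (a : Idx n (d - 1)) : Idx n d :=
  ⟨a.1 + Finsupp.single i 1, by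
    simp only [Finsupp.add_apply, Finset.sum_add_distrib, sum_single_one]
    have := a.2
    omega⟩

theorem atoms (n d : ℕ) (hd : 1 ≤ d) (y : (Fin n →₀ ℕ) → ℝ)
    (hM : (momMat n d y).PosSemidef)
    (hflat : (momMat n d y).rank = (momMat n (d - 1) y).rank) :
    ∃ (r : ℕ) (lam : Fin r → ℝ) (a : Fin r → (Fin n → ℝ)),
      (∀ k, 0 < lam k) ∧
      ∀ γ : Fin n →₀ ℕ, (∑ i, γ i) ≤ 2 * d → y γ = ∑ k, lam k * ∏ i, a k i ^ γ i := by
  classical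
  set M := momMat n d y with hMdef
  set W := CFC.sqrt M with hWdef
  have hWherm : Wᵀ = W := by
    have := (CFC.sqrt_nonneg M).posSemidef.1
    rwa [Matrix.IsHermitian, Matrix.conjTranspose_eq_transpose_of_trivial] at this
  have hWW : Wᵀ * W = M := by rw [hWherm]; exact CFC.sqrt_mul_sqrt_self M hM.nonneg
  -- the Gram vectors
  set E := EuclideanSpace ℝ (Idx n d) with hEdef
  set w : Idx n d → E := fun a => (WithLp.equiv 2 (Idx n d → ℝ)).symm (Wᵀ a) with hwdef
  have hkey : ∀ a b : Idx n d, ⟪w a, w b⟫ = y (a.1 + b.1) := by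
    intro a b
    have : ⟪w a, w b⟫ = ∑ j, W j a * W j b := by
      rw [PiLp.inner_apply]
      apply Finset.sum_congr rfl
      intro j _
      simp [hwdef, RCLike.inner_apply, mul_comm]
    rw [this]
    have : (Wᵀ * W) a b = ∑ j, W j a * W j b := by
      rw [Matrix.mul_apply]
      apply Finset.sum_congr rfl
      intro j _
      rw [Matrix.transpose_apply]
    rw [← this, hWW]
    rfl
  -- spans
  set ι : Idx n (d - 1) → Idx n d := idxIncl n d with hιdef
  set Sfull : Submodule ℝ E := Submodule.span ℝ (Set.range w) with hSf
  set Slow : Submodule ℝ E := Submodule.span ℝ (Set.range (fun a => w (ι a))) with hSl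
  have hle : Slow ≤ Sfull :=
    Submodule.span_mono (by rintro _ ⟨a, rfl⟩; exact ⟨ι a, rfl⟩)
  have hSeq : Slow = Sfull := by
    set e : (Idx n d → ℝ) ≃ₗ[ℝ] E := (WithLp.linearEquiv 2 ℝ (Idx n d → ℝ)).symm with hedef
    have hfull : Module.finrank ℝ Sfull = W.rank := by
      have h1 : Sfull = Submodule.map (e : (Idx n d → ℝ) →ₗ[ℝ] E) (Submodule.span ℝ (Set.range Wᵀ)) := by
        rw [Submodule.map_span]
        congr 1
        erw [← Set.range_comp]
        rfl
      rw [h1]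
      exact ((e.submoduleMap _).finrank_eq).symm.trans (Matrix.rank_eq_finrank_span_cols W).symm
    set G : Matrix (Idx n d) (Idx n (d - 1)) ℝ := W.submatrix id ι with hGdef
    have hGram : Gᵀ * G = momMat n (d - 1) y := by
      ext a b
      have : (Gᵀ * G) a b = (Wᵀ * W) (ι a) (ι b) := by
        rw [Matrix.mul_apply, Matrix.mul_apply]
        apply Finset.sum_congr rfl
        intro j _
        rfl
      rw [this, hWW]
      rfl
    have hlow : Module.finrank ℝ Slow = G.rank := by
      have h1 : Slow = Submodule.map (e : (Idx n d → ℝ) →ₗ[ℝ] E) (Submodule.span ℝ (Set.range Gᵀ)) := by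
        rw [Submodule.map_span]
        congr 1
        erw [← Set.range_comp]
        rfl
      rw [h1]
      exact ((e.submoduleMap _).finrank_eq).symm.trans (Matrix.rank_eq_finrank_span_cols G).symm
    have hMrank : M.rank = W.rank := by
      rw [← hWW, Matrix.rank_transpose_mul_self]
    have hGrank : (momMat n (d - 1) y).rank = G.rank := by
      rw [← hGram, Matrix.rank_transpose_mul_self]
    exact Submodule.eq_of_le_of_finrank_le hle (by omega)
  -- orthogonality helper
  have ortho : ∀ v : E, v ∈ Sfull → (∀ b : Idx n (d - 1), ⟪w (ι b), v⟫ = 0) → v = 0 := by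
    intro v hv hbv
    have hsub : Slow ≤ (ℝ ∙ v)ᗮ := by
      rw [hSl]
      apply Submodule.span_le.mpr
      rintro _ ⟨b, rfl⟩
      exact Submodule.mem_orthogonal_singleton_iff_inner_left.mpr (hbv b)
    have hvv : ⟪v, v⟫ = (0 : ℝ) :=
      Submodule.mem_orthogonal_singleton_iff_inner_left.mp (hsub (hSeq ▸ hv))
    exact inner_self_eq_zero.mp hvv
  -- the shift maps on coefficient space
  set φ : (Idx n (d - 1) → ℝ) →ₗ[ℝ] E :=
    ∑ a, LinearMap.smulRight (LinearMap.proj a) (w (ι a)) with hφdef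
  set ψ : Fin n → (Idx n (d - 1) → ℝ) →ₗ[ℝ] E :=
    fun i => ∑ a, LinearMap.smulRight (LinearMap.proj a) (w (idxShift hd i a)) with hψdef
  have hφapp : ∀ c, φ c = ∑ a, c a • w (ι a) := by
    intro c
    simp [hφdef, LinearMap.sum_apply, LinearMap.smulRight_apply, LinearMap.proj_apply]
  have hψapp : ∀ i c, ψ i c = ∑ a, c a • w (idxShift hd i a) := by
    intro i c
    simp [hψdef, LinearMap.sum_apply, LinearMap.smulRight_apply, LinearMap.proj_apply]
  have hwmem : ∀ a, w a ∈ Sfull := fun a => Submodule.subset_span ⟨a, rfl⟩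
  have hφmem : ∀ c, φ c ∈ Sfull := by
    intro c
    rw [hφapp]
    exact Submodule.sum_mem _ fun a _ => Submodule.smul_mem _ _ (hwmem _)
  have hψmem : ∀ i c, ψ i c ∈ Sfull := by
    intro i c
    rw [hψapp]
    exact Submodule.sum_mem _ fun a _ => Submodule.smul_mem _ _ (hwmem _)
  have hφsingle : ∀ a, φ (Pi.single a 1) = w (ι a) := by
    intro a
    rw [hφapp]
    rw [Finset.sum_eq_single a (fun b _ hb => by rw [Pi.single_eq_of_ne hb, zero_smul])
      (fun h => absurd (Finset.mem_univ a) h)]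
    rw [Pi.single_eq_same, one_smul]
  have hψsingle : ∀ i a, ψ i (Pi.single a 1) = w (idxShift hd i a) := by
    intro i a
    rw [hψapp]
    rw [Finset.sum_eq_single a (fun b _ hb => by rw [Pi.single_eq_of_ne hb, zero_smul])
      (fun h => absurd (Finset.mem_univ a) h)]
    rw [Pi.single_eq_same, one_smul]
  -- pairing formula
  have hpair : ∀ (u v : Idx n (d - 1) → Idx n d) (c e : Idx n (d - 1) → ℝ),
      ⟪∑ a, c a • w (u a), ∑ b, e b • w (v b)⟫ =
        ∑ a, ∑ b, c a * e b * y ((u a).1 + (v b).1) := by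
    intro u v c e
    rw [sum_inner]
    apply Finset.sum_congr rfl
    intro a _
    rw [real_inner_smul_left, inner_sum, Finset.mul_sum]
    apply Finset.sum_congr rfl
    intro b _
    rw [real_inner_smul_right, hkey]
    ring
  -- kernel inclusion (uses flatness through `ortho`)
  have hker : ∀ i : Fin n, LinearMap.ker φ ≤ LinearMap.ker (ψ i) := by
    intro i c hc
    rw [LinearMap.mem_ker] at hc ⊢
    apply ortho _ (hψmem i c)
    intro b
    have h1 : ⟪w (ι b), ψ i c⟫ = ∑ a, c a * y ((ι b).1 + (idxShift hd i a).1) := by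
      rw [hψapp, inner_sum]
      apply Finset.sum_congr rfl
      intro a _
      rw [real_inner_smul_right, hkey]
    have h2 : ⟪w (idxShift hd i b), φ c⟫ = ∑ a, c a * y ((idxShift hd i b).1 + (ι a).1) := by
      rw [hφapp, inner_sum]
      apply Finset.sum_congr rfl
      intro a _
      rw [real_inner_smul_right, hkey]
    rw [h1]
    have h3 : ∀ a : Idx n (d - 1), (ι b).1 + (idxShift hd i a).1 =
        (idxShift hd i b).1 + (ι a).1 := by
      intro a
      show b.1 + (a.1 + Finsupp.single i 1) = (b.1 + Finsupp.single i 1) + a.1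
      abel
    calc (∑ a, c a * y ((ι b).1 + (idxShift hd i a).1))
        = ∑ a, c a * y ((idxShift hd i b).1 + (ι a).1) := by
          apply Finset.sum_congr rfl; intro a _; rw [h3]
      _ = ⟪w (idxShift hd i b), φ c⟫ := h2.symm
      _ = 0 := by rw [hc, inner_zero_right]
  -- restrict to the subspace
  set φ' : (Idx n (d - 1) → ℝ) →ₗ[ℝ] ↥Sfull := φ.codRestrict Sfull hφmem with hφ'def
  set ψ' : Fin n → (Idx n (d - 1) → ℝ) →ₗ[ℝ] ↥Sfull :=
    fun i => (ψ i).codRestrict Sfull (hψmem i) with hψ'def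
  set wS : Idx n d → ↥Sfull := fun a => ⟨w a, hwmem a⟩ with hwSdef
  have hφ'surj : Function.Surjective φ' := by
    intro x
    have h2 : Sfull ≤ LinearMap.range φ := by
      rw [← hSeq, hSl]
      apply Submodule.span_le.mpr
      rintro _ ⟨a, rfl⟩
      exact ⟨Pi.single a 1, hφsingle a⟩
    obtain ⟨c, hc⟩ := h2 x.2
    exact ⟨c, Subtype.ext hc⟩
  obtain ⟨σ, hσ⟩ := φ'.exists_rightInverse_of_surjective (LinearMap.range_eq_top.mpr hφ'surj)
  set X : Fin n → ↥Sfull →ₗ[ℝ] ↥Sfull := fun i => (ψ' i) ∘ₗ σ with hXdef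
  have hXφ' : ∀ i c, X i (φ' c) = ψ' i c := by
    intro i c
    have h1 : φ' (σ (φ' c)) = φ' c := by
      have := LinearMap.ext_iff.mp hσ (φ' c)
      simpa using this
    have h2 : σ (φ' c) - c ∈ LinearMap.ker φ := by
      rw [LinearMap.mem_ker, map_sub, sub_eq_zero]
      exact congrArg Subtype.val h1
    have h3 : ψ i (σ (φ' c)) = ψ i c := by
      have := hker i h2
      rw [LinearMap.mem_ker, map_sub, sub_eq_zero] at this
      exact this
    exact Subtype.ext h3
  have hφ'single : ∀ a, φ' (Pi.single a 1) = wS (ι a) := fun a => Subtype.ext (hφsingle a)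
  have hψ'single : ∀ i a, ψ' i (Pi.single a 1) = wS (idxShift hd i a) :=
    fun i a => Subtype.ext (hψsingle i a)
  have hXw : ∀ i a, X i (wS (ι a)) = wS (idxShift hd i a) := by
    intro i a
    rw [← hφ'single, hXφ', hψ'single]
  -- inner products of restricted images
  have hpair' : ∀ (i j : Fin n) (c e : Idx n (d - 1) → ℝ),
      ⟪ψ' i c, ψ' j e⟫ = ∑ a, ∑ b, c a * e b *
        y ((idxShift hd i a).1 + (idxShift hd j b).1) := by
    intro i j c e
    have : ⟪ψ' i c, ψ' j e⟫ = ⟪ψ i c, ψ j e⟫ := rfl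
    rw [this, hψapp, hψapp, hpair]
  have hpairφψ : ∀ (i : Fin n) (c e : Idx n (d - 1) → ℝ),
      ⟪ψ' i c, φ' e⟫ = ∑ a, ∑ b, c a * e b * y ((idxShift hd i a).1 + (ι b).1) := by
    intro i c e
    have : ⟪ψ' i c, φ' e⟫ = ⟪ψ i c, φ e⟫ := rfl
    rw [this, hψapp, hφapp, hpair]
  have hpairψφ : ∀ (i : Fin n) (c e : Idx n (d - 1) → ℝ),
      ⟪φ' c, ψ' i e⟫ = ∑ a, ∑ b, c a * e b * y ((ι a).1 + (idxShift hd i b).1) := by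
    intro i c e
    have : ⟪φ' c, ψ' i e⟫ = ⟪φ c, ψ i e⟫ := rfl
    rw [this, hψapp, hφapp, hpair]
  -- symmetry of the operators
  have hsym : ∀ i, (X i).IsSymmetric := by
    intro i x z
    obtain ⟨c, rfl⟩ := hφ'surj x
    obtain ⟨e, rfl⟩ := hφ'surj z
    rw [hXφ', hXφ', hpairφψ, hpairψφ]
    apply Finset.sum_congr rfl
    intro a _
    apply Finset.sum_congr rfl
    intro b _
    congr 2
    show (a.1 + Finsupp.single i 1) + b.1 = a.1 + (b.1 + Finsupp.single i 1)
    abel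
  -- commutativity
  have hcomm : Pairwise (Function.onFun Commute X) := by
    intro i j _
    show X i * X j = X j * X i
    have key : ∀ u z : ↥Sfull, ⟪(X i * X j) u, z⟫ = ⟪(X j * X i) u, z⟫ := by
      intro u z
      obtain ⟨c, rfl⟩ := hφ'surj u
      obtain ⟨e, rfl⟩ := hφ'surj z
      have l1 : (X i * X j) (φ' c) = X i (ψ' j c) := by
        rw [Module.End.mul_apply, hXφ']
      have l2 : (X j * X i) (φ' c) = X j (ψ' i c) := by
        rw [Module.End.mul_apply, hXφ']
      rw [l1, l2, hsym i, hsym j, hXφ', hXφ', hpair' j i, hpair' i j]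
      apply Finset.sum_congr rfl
      intro a _
      apply Finset.sum_congr rfl
      intro b _
      congr 2
      show (a.1 + Finsupp.single j 1) + (b.1 + Finsupp.single i 1) =
        (a.1 + Finsupp.single i 1) + (b.1 + Finsupp.single j 1)
      abel
    apply LinearMap.ext
    intro u
    have hz : ∀ z : ↥Sfull, ⟪(X i * X j) u - (X j * X i) u, z⟫ = (0 : ℝ) := by
      intro z
      rw [inner_sub_left, key, sub_self]
    have := hz ((X i * X j) u - (X j * X i) u)
    rw [inner_self_eq_zero] at this
    exact sub_eq_zero.mp this
  -- joint eigenspace decomposition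
  have htop := LinearMap.IsSymmetric.iSup_iInf_eq_top_of_commute hsym hcomm
  set o : Idx n d := ⟨0, by simp⟩ with hodef
  have hmem : wS o ∈ (⊤ : Submodule ℝ ↥Sfull) := Submodule.mem_top
  rw [← htop, Submodule.mem_iSup_iff_exists_finsupp] at hmem
  obtain ⟨v, hvmem, hvsum⟩ := hmem
  have heig : ∀ (χ : Fin n → ℝ) (i : Fin n), X i (v χ) = χ i • v χ := by
    intro χ i
    exact Module.End.mem_eigenspace_iff.mp ((Submodule.mem_iInf _).mp (hvmem χ) i)
  have horthf := LinearMap.IsSymmetric.orthogonalFamily_iInf_eigenspaces hsym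
  have horth : ∀ χ χ' : Fin n → ℝ, χ ≠ χ' → ⟪v χ, v χ'⟫ = (0 : ℝ) := by
    intro χ χ' hne
    exact horthf hne ⟨v χ, hvmem χ⟩ ⟨v χ', hvmem χ'⟩
  -- expansion of the Gram vectors in terms of joint eigenvectors
  have hmono : ∀ (χ : Fin n → ℝ) (b₀ : Fin n →₀ ℕ) (i : Fin n),
      (∏ j, χ j ^ ((b₀ + Finsupp.single i 1 : Fin n →₀ ℕ) j)) = (∏ j, χ j ^ b₀ j) * χ i := by
    intro χ b₀ i
    simp only [Finsupp.add_apply, pow_add, Finset.prod_mul_distrib]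
    congr 1
    simp [Finsupp.single_apply, pow_ite]
  have hwexp : ∀ (m : ℕ) (a : Idx n d), (∑ i, a.1 i) = m →
      wS a = ∑ χ ∈ v.support, (∏ i, χ i ^ (a.1 i)) • v χ := by
    intro m
    induction m with
    | zero =>
      intro a ha
      have h0 : a.1 = 0 := by
        ext j
        have := Finset.sum_eq_zero_iff.mp ha j (Finset.mem_univ j)
        simpa using this
      have hao : a = o := Subtype.ext h0
      subst hao
      rw [Finsupp.sum] at hvsum
      rw [← hvsum]
      apply Finset.sum_congr rfl
      intro χ _
      rw [hodef]
      simp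
    | succ m ih =>
      intro a ha
      have hex : ∃ i, a.1 i ≠ 0 := by
        by_contra hc
        push_neg at hc
        simp [hc] at ha
      obtain ⟨i, hi⟩ := hex
      set b₀ : Fin n →₀ ℕ := a.1 - Finsupp.single i 1 with hb₀
      have hadd : b₀ + Finsupp.single i 1 = a.1 := by
        ext j
        simp only [hb₀, Finsupp.add_apply, Finsupp.tsub_apply, Finsupp.single_apply]
        rcases eq_or_ne i j with rfl | hij
        · simp only [if_true, eq_self_iff_true]
          omega
        · simp [hij]
      have hsb : (∑ j, b₀ j) = m := by
        have h2 := congrArg (fun t : Fin n →₀ ℕ => ∑ j, t j) hadd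
        simp only [Finsupp.add_apply, Finset.sum_add_distrib, _root_.sum_single_one] at h2
        omega
      have hmd : m ≤ d - 1 := by
        have := a.2
        omega
      set b : Idx n (d - 1) := ⟨b₀, by omega⟩ with hbdef
      have hba : idxShift hd i b = a := Subtype.ext (by
        show b₀ + Finsupp.single i 1 = a.1
        exact hadd)
      have hιb : ((ι b).1 : Fin n →₀ ℕ) = b₀ := rfl
      have ihb := ih (ι b) (by rw [hιb]; exact hsb)
      calc wS a = X i (wS (ι b)) := by rw [hXw, hba]
        _ = ∑ χ ∈ v.support, (∏ j, χ j ^ b₀ j) • X i (v χ) := by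
            rw [ihb, map_sum]
            apply Finset.sum_congr rfl
            intro χ _
            rw [LinearMap.map_smul, hιb]
        _ = ∑ χ ∈ v.support, (∏ j, χ j ^ (a.1 j)) • v χ := by
            apply Finset.sum_congr rfl
            intro χ _
            rw [heig, ← hadd, hmono]
            rw [smul_smul, mul_comm]
  -- Gram entries via the eigen-decomposition
  have hgram : ∀ a b : Idx n d, y (a.1 + b.1) =
      ∑ χ ∈ v.support, (∏ i, χ i ^ (a.1 i)) * (∏ i, χ i ^ (b.1 i)) * ⟪v χ, v χ⟫ := by
    intro a b
    have h1 : y (a.1 + b.1) = ⟪wS a, wS b⟫ := by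
      rw [← hkey a b]
      rfl
    rw [h1, hwexp _ a rfl, hwexp _ b rfl, sum_inner]
    apply Finset.sum_congr rfl
    intro χ hχ
    rw [real_inner_smul_left (v χ) (∑ χ ∈ v.support, (∏ i, χ i ^ (b.1 i)) • v χ) (∏ i, χ i ^ (a.1 i))]
    rw [inner_sum]
    rw [Finset.sum_eq_single χ
      (fun χ' _ hne => by rw [real_inner_smul_right (v χ) (v χ') (∏ i, χ' i ^ (b.1 i)), horth χ χ' (Ne.symm hne)]; ring)
      (fun h => absurd hχ h)]
    rw [real_inner_smul_right (v χ) (v χ) (∏ i, χ i ^ (b.1 i))]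
    ring
  -- package the atoms
  set r : ℕ := v.support.card with hrdef
  set eqv : {x // x ∈ v.support} ≃ Fin r := v.support.equivFin with heqv
  refine ⟨r, fun k => ⟪v ((eqv.symm k).1), v ((eqv.symm k).1)⟫,
    fun k => (eqv.symm k).1, ?_, ?_⟩
  · intro k
    have hne : v ((eqv.symm k).1 : Fin n → ℝ) ≠ 0 := Finsupp.mem_support_iff.mp (eqv.symm k).2
    have h0 : (0:ℝ) ≤ ⟪v ((eqv.symm k).1 : Fin n → ℝ), v ((eqv.symm k).1 : Fin n → ℝ)⟫ :=
      real_inner_self_nonneg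
    rcases h0.lt_or_eq with h | h
    · exact h
    · exact absurd (inner_self_eq_zero.mp h.symm) hne
  · intro γ hγ
    obtain ⟨α, β, hα, hβ, hab⟩ := finsupp_split d γ hγ
    have h1 : y γ = ∑ χ ∈ v.support,
        (∏ i, χ i ^ γ i) * ⟪v χ, v χ⟫ := by
      rw [← hab]
      rw [hgram ⟨α, hα⟩ ⟨β, hβ⟩]
      apply Finset.sum_congr rfl
      intro χ _
      have : (∏ i, χ i ^ ((α + β : Fin n →₀ ℕ) i)) =
          (∏ i, χ i ^ α i) * (∏ i, χ i ^ β i) := by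
        rw [← Finset.prod_mul_distrib]
        exact Finset.prod_congr rfl fun i _ => by rw [Finsupp.add_apply, pow_add]
      rw [this]
    rw [h1]
    rw [← Finset.sum_coe_sort v.support (fun χ => (∏ i, χ i ^ γ i) * ⟪v χ, v χ⟫)]
    rw [← Equiv.sum_comp eqv.symm
      (fun z => (∏ i, (z : Fin n → ℝ) i ^ γ i) * ⟪v (z : Fin n → ℝ), v (z : Fin n → ℝ)⟫)]
    apply Finset.sum_congr rfl
    intro k _
    ring

end Atoms
/-- if an optimal solution `y` of `(P_{2d})` has a flat moment matrix
(`rank M_d(y) = rank M_{d-1}(y)`), then `P* = P*_{2d}` and `M_d(y)` decomposes as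
`Σᵢ λᵢ V_d(aᵢ)V_d(aᵢ)ᵀ` with `λᵢ > 0`, where every `aᵢ` is a global minimizer of `f`. -/
theorem optimality_from_flatness (n d : ℕ) (hd : 1 ≤ d) (f : MvPolynomial (Fin n) ℝ)
    (hf : f.totalDegree ≤ 2 * d) (y : (Fin n →₀ ℕ) → ℝ)
    (hfeas : momFeasible n (2 * d) y)
    (hopt : ((riesz y f : ℝ) : EReal) = momOpt n (2 * d) f)
    (hflat : (momMat n d y).rank = (momMat n (d - 1) y).rank) :
    globalOpt n f = momOpt n (2 * d) f ∧
    ∃ (r : ℕ) (lam : Fin r → ℝ) (a : Fin r → (Fin n → ℝ)),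
      (∀ i, 0 < lam i) ∧
      momMat n d y =
        ∑ i, lam i • Matrix.vecMulVec (monoVec n d (a i)) (monoVec n d (a i)) ∧
      ∀ i, ((eval (a i) f : ℝ) : EReal) = globalOpt n f := by
  classical
  obtain ⟨hy0, hpsd⟩ := hfeas
  have h2d : 2 * d / 2 = d := by omega
  rw [h2d] at hpsd
  obtain ⟨r, lam, a, hlam, hrep⟩ := atoms n d hd y hpsd hflat
  -- the weights sum to one
  have hsum : ∑ k, lam k = 1 := by
    have h := hrep 0 (by simp)
    rw [hy0] at h
    simpa using h.symm
  -- the Riesz functional is a convex combination of the values at the atoms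
  have hdeg : ∀ α ∈ f.support, (∑ i, α i) ≤ 2 * d := by
    intro α hα
    refine le_trans ?_ hf
    have h1 := MvPolynomial.le_totalDegree hα
    have h2 : (α.sum fun _ e => e) = ∑ i, α i := Finsupp.sum_fintype _ _ (fun _ => rfl)
    omega
  have hriesz : riesz y f = ∑ k, lam k * eval (a k) f := by
    rw [riesz]
    calc (∑ α ∈ f.support, f.coeff α * y α)
        = ∑ α ∈ f.support, ∑ k, lam k * (f.coeff α * ∏ i, a k i ^ α i) := by
          apply Finset.sum_congr rfl
          intro α hα
          rw [hrep α (hdeg α hα), Finset.mul_sum]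
          apply Finset.sum_congr rfl
          intro k _
          ring
      _ = ∑ k, lam k * ∑ α ∈ f.support, f.coeff α * ∏ i, a k i ^ α i := by
          rw [Finset.sum_comm]
          apply Finset.sum_congr rfl
          intro k _
          rw [Finset.mul_sum]
      _ = ∑ k, lam k * eval (a k) f := by
          apply Finset.sum_congr rfl
          intro k _
          rw [eval_eq']
  have h1 : momOpt n (2 * d) f ≤ globalOpt n f := momOpt_le_globalOpt n d f
  have h2 : ∀ x : Fin n → ℝ, globalOpt n f ≤ ((eval x f : ℝ) : EReal) :=
    fun x => sInf_le ⟨x, rfl⟩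
  have hr : r ≠ 0 := by
    rintro rfl
    simp at hsum
  have : Nonempty (Fin r) := ⟨⟨0, Nat.pos_of_ne_zero hr⟩⟩
  obtain ⟨k₀, -, hk₀⟩ := Finset.exists_min_image Finset.univ (fun k => eval (a k) f)
    Finset.univ_nonempty
  have hminle : eval (a k₀) f ≤ riesz y f := by
    rw [hriesz]
    calc eval (a k₀) f = ∑ k, lam k * eval (a k₀) f := by
          rw [← Finset.sum_mul, hsum, one_mul]
      _ ≤ ∑ k, lam k * eval (a k) f :=
          Finset.sum_le_sum fun k _ =>
            mul_le_mul_of_nonneg_left (hk₀ k (Finset.mem_univ k)) (hlam k).le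
  have hglob_le : globalOpt n f ≤ momOpt n (2 * d) f := by
    rw [← hopt]
    calc globalOpt n f ≤ ((eval (a k₀) f : ℝ) : EReal) := h2 _
      _ ≤ ((riesz y f : ℝ) : EReal) := EReal.coe_le_coe_iff.mpr hminle
  have hmain : globalOpt n f = momOpt n (2 * d) f := le_antisymm hglob_le h1
  refine ⟨hmain, r, lam, a, hlam, ?_, ?_⟩
  · -- the moment matrix decomposition
    ext b c
    have hb := b.2
    have hc := c.2
    have hbc : (∑ i, (b.1 + c.1 : Fin n →₀ ℕ) i) ≤ 2 * d := by
      simp only [Finsupp.add_apply, Finset.sum_add_distrib]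
      omega
    have hL : momMat n d y b c = ∑ k, lam k * ∏ i, a k i ^ ((b.1 + c.1 : Fin n →₀ ℕ) i) :=
      hrep _ hbc
    rw [hL, Matrix.sum_apply]
    apply Finset.sum_congr rfl
    intro k _
    rw [Matrix.smul_apply, Matrix.vecMulVec_apply]
    have : (∏ i, a k i ^ ((b.1 + c.1 : Fin n →₀ ℕ) i)) =
        monoVec n d (a k) b * monoVec n d (a k) c := by
      rw [monoVec, monoVec, ← Finset.prod_mul_distrib]
      exact Finset.prod_congr rfl fun i _ => by rw [Finsupp.add_apply, pow_add]
    rw [this]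
    rfl
  · -- every atom is a global minimizer
    intro k
    have hgr : globalOpt n f = ((riesz y f : ℝ) : EReal) := by rw [hmain, ← hopt]
    have hge : ∀ j, riesz y f ≤ eval (a j) f := by
      intro j
      have h3 := h2 (a j)
      rw [hgr] at h3
      exact EReal.coe_le_coe_iff.mp h3
    have hsum0 : ∑ j, lam j * (eval (a j) f - riesz y f) = 0 := by
      have : ∑ j, lam j * (eval (a j) f - riesz y f)
          = (∑ j, lam j * eval (a j) f) - (∑ j, lam j) * riesz y f := by
        rw [Finset.sum_mul, ← Finset.sum_sub_distrib]
        apply Finset.sum_congr rfl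
        intro j _
        ring
      rw [this, ← hriesz, hsum, one_mul, sub_self]
    have hzero := (Finset.sum_eq_zero_iff_of_nonneg
      (fun j _ => mul_nonneg (hlam j).le (sub_nonneg.mpr (hge j)))).mp hsum0
    have hk := hzero k (Finset.mem_univ k)
    have : eval (a k) f = riesz y f := by
      rcases mul_eq_zero.mp hk with h | h
      · exact absurd h (hlam k).ne'
      · linarith [sub_eq_zero.mp h]
    rw [this, ← hgr]
end
end

section
/- Let f ∈ ℝ[X₁,…,Xₙ] with deg f ≤ 2d, d ≥ 1, suppose f attains its global infimum on ℝⁿ, and let y be an optimal solution of the NDS relaxation (P_{2d,NDS}) such that M_d(y) is flat, i.e. rank M_d(y) = rank M_{d-1}(y). Then there exist N ∈ ℕ, λ₁,…,λ_N > 0 and a₁,…,a_N ∈ ℝⁿ such that M_d(y) = Σᵢ λᵢ V_d(aᵢ)V_d(aᵢ)ᵀ. If moreover a₁,…,a_N all lie in the real gradient variety V_f, then P* = P*_{2d,NDS} and each aᵢ is a global minimizer of f. -/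
open MvPolynomial Matrix

noncomputable section

/-- Feasibility for the NDS (gradient) relaxation `(P_{k,NDS})` : `y_0 = 1`,
`M_{⌊k/2⌋}(y) ⪰ 0`, and `L_y(g·∂f/∂Xᵢ) = 0` for all admissible `g` and all `i`. -/
def ndsFeasible (n k : ℕ) (f : MvPolynomial (Fin n) ℝ) (y : (Fin n →₀ ℕ) → ℝ) : Prop :=
  y 0 = 1 ∧ (momMat n (k / 2) y).PosSemidef ∧
    ∀ i : Fin n, ∀ g : MvPolynomial (Fin n) ℝ,
      (g * pderiv i f).totalDegree ≤ k → riesz y (g * pderiv i f) = 0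

/-- `P*_{k,NDS}`, the optimal value of the NDS relaxation. -/
def ndsOpt (n k : ℕ) (f : MvPolynomial (Fin n) ℝ) : EReal :=
  sInf {v : EReal | ∃ y, ndsFeasible n k f y ∧ v = (riesz y f : ℝ)}


namespace NDSAux

open scoped RealInnerProductSpace

variable {n : ℕ}

/-- total degree of a multi-index -/
abbrev deg {n : ℕ} (α : Fin n →₀ ℕ) : ℕ := ∑ i, α i

lemma deg_add (α β : Fin n →₀ ℕ) : deg (α + β) = deg α + deg β := by
  simp [deg, Finsupp.add_apply, Finset.sum_add_distrib]

lemma deg_single (i : Fin n) : deg (Finsupp.single i 1) = 1 := by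
  simp [deg, Finsupp.single_apply]

lemma sub_single_add {γ : Fin n →₀ ℕ} {i : Fin n} (h : γ i ≠ 0) :
    (γ - Finsupp.single i 1) + Finsupp.single i 1 = γ := by
  ext j
  simp only [Finsupp.add_apply, Finsupp.tsub_apply, Finsupp.single_apply]
  by_cases hij : i = j
  · subst hij
    rw [if_pos rfl]
    omega
  · simp [hij]

lemma deg_eq_zero_iff {γ : Fin n →₀ ℕ} : deg γ = 0 ↔ γ = 0 := by
  constructor
  · intro h
    ext j
    have := Finset.sum_eq_zero_iff.mp h j (Finset.mem_univ j)
    simpa using this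
  · rintro rfl; simp [deg]

abbrev mpow (x : Fin n → ℝ) (γ : Fin n →₀ ℕ) : ℝ := ∏ i, x i ^ γ i

lemma mpow_add (x : Fin n → ℝ) (α β : Fin n →₀ ℕ) :
    mpow x (α + β) = mpow x α * mpow x β := by
  simp [mpow, pow_add, Finset.prod_mul_distrib]

lemma mpow_zero (x : Fin n → ℝ) : mpow x 0 = 1 := by simp [mpow]

lemma mpow_single (x : Fin n → ℝ) (i : Fin n) : mpow x (Finsupp.single i 1) = x i := by
  simp [mpow, Finsupp.single_apply, pow_ite]

lemma deg_eq_sum (γ : Fin n →₀ ℕ) : deg γ = γ.sum fun _ e => e := by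
  rw [Finsupp.sum]
  exact (Finset.sum_subset (Finset.subset_univ _)
    (fun i _ hn => Finsupp.notMem_support_iff.mp hn)).symm

lemma exists_split (d : ℕ) : ∀ m, ∀ γ : Fin n →₀ ℕ, deg γ ≤ m → deg γ ≤ 2*d →
    ∃ α β : Fin n →₀ ℕ, deg α ≤ d ∧ deg β ≤ d ∧ α + β = γ := by
  intro m
  induction m with
  | zero =>
    intro γ h1 _
    exact ⟨γ, 0, by omega, by simp [deg], by simp⟩
  | succ m ih =>
    intro γ h1 h2
    by_cases hle : deg γ ≤ d
    · exact ⟨γ, 0, hle, by simp [deg], by simp⟩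
    · push_neg at hle
      have hpos : 0 < deg γ := by omega
      have hex : ∃ i, γ i ≠ 0 := by
        by_contra hc
        push_neg at hc
        simp only [deg] at hpos
        have : (∑ i, γ i) = 0 := Finset.sum_eq_zero fun i _ => hc i
        omega
      obtain ⟨i, hi⟩ := hex
      set γ' := γ - Finsupp.single i 1 with hγ'
      have hkey : γ' + Finsupp.single i 1 = γ := sub_single_add hi
      have hdeg' : deg γ' + 1 = deg γ := by
        have := deg_add γ' (Finsupp.single i 1)
        rw [hkey, deg_single] at this
        omega
      obtain ⟨α, β, hα, hβ, hsum⟩ := ih γ' (by omega) (by omega)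
      have hab : deg α + deg β = deg γ' := by rw [← hsum, deg_add]
      by_cases hc : deg α < d
      · refine ⟨α + Finsupp.single i 1, β, ?_, hβ, ?_⟩
        · rw [deg_add, deg_single]; omega
        · rw [add_comm α, add_assoc, hsum, add_comm, hkey]
      · refine ⟨α, β + Finsupp.single i 1, hα, ?_, ?_⟩
        · rw [deg_add, deg_single]; omega
        · rw [← add_assoc, hsum, hkey]

variable {κ : Type*} [Fintype κ] {E : Type*}

def lmap [AddCommGroup E] [Module ℝ E] (v : κ → E) : (κ → ℝ) →ₗ[ℝ] E where
  toFun c := ∑ a, c a • v a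
  map_add' c c' := by simp [add_smul, Finset.sum_add_distrib]
  map_smul' r c := by simp [smul_smul, Finset.smul_sum]

lemma lmap_apply [AddCommGroup E] [Module ℝ E] (v : κ → E) (c : κ → ℝ) :
    lmap v c = ∑ a, c a • v a := rfl

lemma lmap_single [DecidableEq κ] [AddCommGroup E] [Module ℝ E] (v : κ → E) (a : κ) :
    lmap v (fun b => if b = a then (1:ℝ) else 0) = v a := by
  simp [lmap_apply, ite_smul]

lemma lmap_mem_span [AddCommGroup E] [Module ℝ E] (v : κ → E) (c : κ → ℝ) :
    lmap v c ∈ Submodule.span ℝ (Set.range v) :=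
  Submodule.sum_mem _ fun a _ => Submodule.smul_mem _ _ (Submodule.subset_span ⟨a, rfl⟩)

lemma range_lmap [DecidableEq κ] [AddCommGroup E] [Module ℝ E] (v : κ → E) :
    LinearMap.range (lmap v) = Submodule.span ℝ (Set.range v) := by
  apply le_antisymm
  · rintro x ⟨c, rfl⟩
    exact lmap_mem_span v c
  · rw [Submodule.span_le]
    rintro x ⟨a, rfl⟩
    exact ⟨fun b => if b = a then 1 else 0, lmap_single v a⟩

lemma inner_lmap_lmap [NormedAddCommGroup E] [InnerProductSpace ℝ E] (v w : κ → E)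
    (c c' : κ → ℝ) :
    ⟪lmap v c, lmap w c'⟫ = ∑ a, ∑ b, c a * c' b * ⟪v a, w b⟫ := by
  simp only [lmap_apply, sum_inner, inner_sum, real_inner_smul_left, real_inner_smul_right]
  rw [Finset.sum_comm]
  exact Finset.sum_congr rfl fun a _ => Finset.sum_congr rfl fun b _ => by ring

lemma inner_lmap [NormedAddCommGroup E] [InnerProductSpace ℝ E] (x : E) (w : κ → E)
    (c : κ → ℝ) : ⟪x, lmap w c⟫ = ∑ a, c a * ⟪x, w a⟫ := by
  simp [lmap_apply, inner_sum, real_inner_smul_right]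

lemma rank_gram {ι : Type*} [Fintype ι] (v : ι → EuclideanSpace ℝ κ) :
    (Matrix.of fun (a b : ι) => ⟪v a, v b⟫).rank
      = Module.finrank ℝ (Submodule.span ℝ (Set.range v)) := by
  classical
  set A : Matrix κ ι ℝ := Matrix.of fun k i => v i k with hA
  have hG : (Matrix.of fun (a b : ι) => ⟪v a, v b⟫) = Aᵀ * A := by
    ext a b
    simp only [Matrix.mul_apply, Matrix.of_apply, Matrix.transpose_apply, hA,
      PiLp.inner_apply, RCLike.inner_apply, conj_trivial]
    exact Finset.sum_congr rfl fun _ _ => mul_comm _ _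
  rw [hG, Matrix.rank_transpose_mul_self, Matrix.rank_eq_finrank_span_cols]
  let L := WithLp.linearEquiv 2 ℝ (κ → ℝ)
  have himg : Set.range A.col = ⇑L '' Set.range v := by
    ext x
    constructor
    · rintro ⟨i, rfl⟩; exact ⟨v i, ⟨i, rfl⟩, rfl⟩
    · rintro ⟨_, ⟨i, rfl⟩, rfl⟩; exact ⟨i, rfl⟩
  rw [himg, ← LinearEquiv.coe_toLinearMap, ← Submodule.map_span]
  exact LinearEquiv.finrank_map_eq L _

/-- Riesz functional of the Dirac family is evaluation. -/
lemma riesz_dirac (x : Fin n → ℝ) (h : MvPolynomial (Fin n) ℝ) :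
    riesz (fun γ => mpow x γ) h = eval x h := by
  rw [riesz, eval_eq']

/-- The Dirac moment matrix is PSD. -/
lemma dirac_psd (n d : ℕ) (x : Fin n → ℝ) :
    (momMat n d (fun γ => mpow x γ)).PosSemidef := by
  refine Matrix.posSemidef_iff_dotProduct_mulVec.mpr ⟨?_, ?_⟩
  · ext a b
    show mpow x (b.1 + a.1) = mpow x (a.1 + b.1)
    rw [add_comm]
  · intro v
    have h1 : (star v) ⬝ᵥ ((momMat n d (fun γ => mpow x γ)).mulVec v)
        = (∑ a, v a * mpow x a.1) * (∑ b, v b * mpow x b.1) := by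
      rw [Finset.sum_mul_sum]
      rw [dotProduct, Finset.sum_congr rfl fun a _ => rfl]
      refine Finset.sum_congr rfl fun a _ => ?_
      rw [Matrix.mulVec, dotProduct, Finset.mul_sum]
      refine Finset.sum_congr rfl fun b _ => ?_
      show v a * ((momMat n d fun γ => mpow x γ) a b * v b) = _
      show v a * (mpow x (a.1 + b.1) * v b) = _
      rw [mpow_add]
      ring
    rw [h1, ← sq]
    positivity

/-- Restricting a multivariate polynomial to a coordinate line. -/
lemma aeval_line (x : Fin n → ℝ) (i : Fin n) (p : MvPolynomial (Fin n) ℝ) (t : ℝ) :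
    Polynomial.eval t
        ((MvPolynomial.aeval fun j => if j = i then Polynomial.X else Polynomial.C (x j)) p)
      = MvPolynomial.eval (Function.update x i t) p := by
  induction p using MvPolynomial.induction_on with
  | C a => simp
  | add p q hp hq => simp [hp, hq]
  | mul_X p j hp =>
    rw [_root_.map_mul, _root_.map_mul, Polynomial.eval_mul, hp, aeval_X, eval_X,
      Function.update_apply]
    by_cases h : j = i <;> simp [h]

lemma derivative_aeval_line (x : Fin n → ℝ) (i : Fin n) (p : MvPolynomial (Fin n) ℝ) :
    Polynomial.derivative
        ((MvPolynomial.aeval fun j => if j = i then Polynomial.X else Polynomial.C (x j)) p)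
      = (MvPolynomial.aeval fun j => if j = i then Polynomial.X else Polynomial.C (x j))
          (pderiv i p) := by
  induction p using MvPolynomial.induction_on with
  | C a => simp
  | add p q hp hq => simp [hp, hq]
  | mul_X p j hp =>
    rw [_root_.map_mul, Polynomial.derivative_mul, hp, pderiv_mul, map_add, _root_.map_mul,
      _root_.map_mul, pderiv_X, aeval_X, Pi.single_apply]
    by_cases h : j = i <;> simp [h]

lemma pderiv_eval_eq_zero_of_min (f : MvPolynomial (Fin n) ℝ) (x : Fin n → ℝ)
    (hmin : ∀ z, eval x f ≤ eval z f) (i : Fin n) :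
    eval x (pderiv i f) = 0 := by
  classical
  set q := (MvPolynomial.aeval fun j => if j = i then Polynomial.X else Polynomial.C (x j)) f
    with hq
  have h1 : ∀ t, Polynomial.eval t q = MvPolynomial.eval (Function.update x i t) f :=
    fun t => aeval_line x i f t
  have hloc : IsLocalMin (fun t => Polynomial.eval t q) (x i) := by
    apply Filter.Eventually.of_forall
    intro t
    show Polynomial.eval (x i) q ≤ Polynomial.eval t q
    rw [h1, h1, Function.update_eq_self]
    exact hmin _
  have hd := hloc.deriv_eq_zero
  rw [Polynomial.deriv, derivative_aeval_line, aeval_line, Function.update_eq_self] at hd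
  exact hd

open scoped MatrixOrder in
lemma psd_eq_ct_mul {ι : Type*} [Fintype ι] [DecidableEq ι] {A : Matrix ι ι ℝ} (h : A.PosSemidef) :
    ∃ B : Matrix ι ι ℝ, A = Bᴴ * B := by
  obtain ⟨X, hX, -, hXA⟩ := CFC.exists_sqrt_of_isSelfAdjoint_of_quasispectrumRestricts
    h.isHermitian (QuasispectrumRestricts.nnreal_of_nonneg h.nonneg)
  refine ⟨X, ?_⟩
  have : Xᴴ = X := hX.star_eq
  rw [this, ← hXA]

set_option maxHeartbeats 1600000 in
/-- Flat PSD moment matrices admit an atomic Gram decomposition (Curto–Fialkow). -/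
lemma flat_decomp (n d : ℕ) (hd : 1 ≤ d) (y : (Fin n →₀ ℕ) → ℝ)
    (hpsd : (momMat n d y).PosSemidef)
    (hflat : (momMat n d y).rank = (momMat n (d-1) y).rank) :
    ∃ (N : ℕ) (lam : Fin N → ℝ) (a : Fin N → (Fin n → ℝ)),
      (∀ i, 0 < lam i) ∧
      momMat n d y = ∑ i, lam i • Matrix.vecMulVec (monoVec n d (a i)) (monoVec n d (a i)) := by
  classical
  obtain ⟨B, hB⟩ := psd_eq_ct_mul hpsd
  set u : Idx n d → EuclideanSpace ℝ (Idx n d) :=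
    fun a => (WithLp.equiv 2 _).symm (fun k => B k a) with hu_def
  have hu : ∀ a b : Idx n d, ⟪u a, u b⟫ = y (a.1 + b.1) := by
    intro a b
    have : y (a.1 + b.1) = (Bᴴ * B) a b := by rw [← hB]; rfl
    rw [this]
    simp [hu_def, PiLp.inner_apply, RCLike.inner_apply, conj_trivial, Matrix.mul_apply,
      Matrix.conjTranspose_apply]
    exact Finset.sum_congr rfl fun _ _ => mul_comm _ _
  -- embeddings of index sets
  have hemb : ∀ a : Idx n (d-1), deg a.1 ≤ d := fun a => le_trans a.2 (Nat.sub_le d 1)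
  set emb : Idx n (d-1) → Idx n d := fun a => ⟨a.1, hemb a⟩ with hemb_def
  have hshift : ∀ (i : Fin n) (a : Idx n (d-1)), deg (a.1 + Finsupp.single i 1) ≤ d := by
    intro i a
    rw [deg_add, deg_single]
    have h2 : deg a.1 ≤ d - 1 := a.2
    omega
  set shf : Fin n → Idx n (d-1) → Idx n d := fun i a => ⟨a.1 + Finsupp.single i 1, hshift i a⟩
    with hshf_def
  -- the spans
  set V : Submodule ℝ (EuclideanSpace ℝ (Idx n d)) := Submodule.span ℝ (Set.range u) with hV_def
  set Vl : Submodule ℝ (EuclideanSpace ℝ (Idx n d)) := Submodule.span ℝ (Set.range (u ∘ emb)) with hVl_def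
  have hrV : (momMat n d y).rank = Module.finrank ℝ V := by
    have : momMat n d y = Matrix.of fun (a b : Idx n d) => ⟪u a, u b⟫ := by
      ext a b; rw [Matrix.of_apply, hu]; rfl
    rw [this, rank_gram]
  have hrVl : (momMat n (d-1) y).rank = Module.finrank ℝ Vl := by
    have : momMat n (d-1) y
        = Matrix.of fun (a b : Idx n (d-1)) => ⟪(u ∘ emb) a, (u ∘ emb) b⟫ := by
      ext a b
      rw [Matrix.of_apply]
      show y (a.1 + b.1) = ⟪u (emb a), u (emb b)⟫
      rw [hu]
    rw [this, rank_gram]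
  have hVlV : Vl ≤ V := by
    apply Submodule.span_mono
    rintro x ⟨a, rfl⟩
    exact ⟨emb a, rfl⟩
  have hVl_eq : Vl = V := by
    apply Submodule.eq_of_le_of_finrank_le hVlV
    rw [← hrV, ← hrVl, hflat]
  -- linear parametrizations
  set S0 : (Idx n (d-1) → ℝ) →ₗ[ℝ] EuclideanSpace ℝ (Idx n d) := lmap (u ∘ emb) with hS0_def
  set U0 : Fin n → (Idx n (d-1) → ℝ) →ₗ[ℝ] EuclideanSpace ℝ (Idx n d) := fun i => lmap (fun a => u (shf i a))
    with hU0_def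
  have hS0mem : ∀ c, S0 c ∈ V := by
    intro c
    rw [← hVl_eq]
    exact lmap_mem_span _ c
  have hU0mem : ∀ i c, U0 i c ∈ V := by
    intro i c
    refine Submodule.span_mono ?_ (lmap_mem_span _ c)
    rintro x ⟨a, rfl⟩
    exact ⟨shf i a, rfl⟩
  set S : (Idx n (d-1) → ℝ) →ₗ[ℝ] V := LinearMap.codRestrict V S0 hS0mem with hS_def
  set U : Fin n → (Idx n (d-1) → ℝ) →ₗ[ℝ] V :=
    fun i => LinearMap.codRestrict V (U0 i) (hU0mem i) with hU_def
  have hScoe : ∀ c, ((S c : V) : EuclideanSpace ℝ (Idx n d)) = S0 c := fun c => rfl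
  have hUcoe : ∀ i c, ((U i c : V) : EuclideanSpace ℝ (Idx n d)) = U0 i c := fun i c => rfl
  have hSsurj : Function.Surjective S := by
    intro x
    have hx : (x : EuclideanSpace ℝ (Idx n d)) ∈ Vl := by rw [hVl_eq]; exact x.2
    rw [hVl_def, ← range_lmap (u ∘ emb)] at hx
    obtain ⟨c, hc⟩ := hx
    exact ⟨c, Subtype.ext hc⟩
  -- kernel inclusion
  have hker : ∀ (i : Fin n) (c : Idx n (d-1) → ℝ), S0 c = 0 → U0 i c = 0 := by
    intro i c hc
    have horth : ∀ b : Idx n (d-1), ⟪u (emb b), U0 i c⟫ = 0 := by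
      intro b
      have h1 : ⟪u (emb b), U0 i c⟫ = ∑ a, c a * y (b.1 + (a.1 + Finsupp.single i 1)) := by
        rw [hU0_def]
        simp only [inner_lmap]
        exact Finset.sum_congr rfl fun a _ => by rw [hu]
      have h2 : ⟪u (shf i b), S0 c⟫ = ∑ a, c a * y ((b.1 + Finsupp.single i 1) + a.1) := by
        rw [hS0_def]
        simp only [inner_lmap]
        exact Finset.sum_congr rfl fun a _ => by rw [Function.comp_apply, hu]
      rw [h1]
      have h3 : ⟪u (shf i b), S0 c⟫ = 0 := by rw [hc, inner_zero_right]
      rw [h2] at h3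
      rw [← h3]
      refine Finset.sum_congr rfl fun a _ => ?_
      congr 1
      abel
    have hmem : U0 i c ∈ Vl := by rw [hVl_eq]; exact hU0mem i c
    have hz : ∀ x ∈ Vl, ⟪x, U0 i c⟫ = 0 := by
      intro x hx
      induction hx using Submodule.span_induction with
      | mem x hx => obtain ⟨b, rfl⟩ := hx; exact horth b
      | zero => rw [inner_zero_left]
      | add x z hx hz ihx ihz => rw [inner_add_left, ihx, ihz, add_zero]
      | smul r x hx ihx => rw [real_inner_smul_left, ihx, mul_zero]
    have := hz _ hmem
    rwa [inner_self_eq_zero] at this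
  have hUS : ∀ (i : Fin n) (c c' : Idx n (d-1) → ℝ), S0 c = S0 c' → U0 i c = U0 i c' := by
    intro i c c' h
    have := hker i (c - c') (by rw [map_sub, h, sub_self])
    rw [map_sub, sub_eq_zero] at this
    exact this
  -- the multiplication operators
  set g : V → (Idx n (d-1) → ℝ) := Function.surjInv hSsurj with hg_def
  have hSg : ∀ x : V, S (g x) = x := fun x => Function.surjInv_eq hSsurj x
  have hS0g : ∀ x : V, S0 (g x) = (x : EuclideanSpace ℝ (Idx n d)) := by
    intro x
    rw [← hScoe, hSg]
  set T : Fin n → V →ₗ[ℝ] V := fun i =>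
    { toFun := fun x => U i (g x)
      map_add' := by
        intro x z
        apply Subtype.ext
        rw [hUcoe]
        have : U0 i (g (x + z)) = U0 i (g x + g z) := by
          apply hUS
          rw [map_add, hS0g, hS0g, hS0g]
          rfl
        rw [this, map_add]
        rfl
      map_smul' := by
        intro r x
        apply Subtype.ext
        rw [hUcoe]
        have : U0 i (g (r • x)) = U0 i (r • g x) := by
          apply hUS
          rw [_root_.map_smul, hS0g, hS0g]
          rfl
        rw [this, _root_.map_smul]
        rfl } with hT_def
  have hTS : ∀ (i : Fin n) (c : Idx n (d-1) → ℝ), T i (S c) = U i c := by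
    intro i c
    apply Subtype.ext
    show U0 i (g (S c)) = U0 i c
    apply hUS
    rw [hS0g]
    rfl
  -- inner product computations
  have hUUinner : ∀ (i j : Fin n) (c c' : Idx n (d-1) → ℝ),
      ⟪U0 i c, U0 j c'⟫ = ∑ a, ∑ b, c a * c' b
        * y (a.1 + b.1 + Finsupp.single i 1 + Finsupp.single j 1) := by
    intro i j c c'
    rw [hU0_def]
    rw [inner_lmap_lmap]
    refine Finset.sum_congr rfl fun a _ => Finset.sum_congr rfl fun b _ => ?_
    rw [hu]
    show c a * c' b * y ((a.1 + Finsupp.single i 1) + (b.1 + Finsupp.single j 1)) = _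
    congr 2
    abel
  have hUSinner : ∀ (i : Fin n) (c c' : Idx n (d-1) → ℝ),
      ⟪U0 i c, S0 c'⟫ = ∑ a, ∑ b, c a * c' b * y (a.1 + b.1 + Finsupp.single i 1) := by
    intro i c c'
    rw [hU0_def, hS0_def, inner_lmap_lmap]
    refine Finset.sum_congr rfl fun a _ => Finset.sum_congr rfl fun b _ => ?_
    rw [Function.comp_apply, hu]
    show c a * c' b * y ((a.1 + Finsupp.single i 1) + b.1) = _
    congr 2
    abel
  have hsym : ∀ i : Fin n, (T i).IsSymmetric := by
    intro i x z
    obtain ⟨c, rfl⟩ := hSsurj x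
    obtain ⟨c', rfl⟩ := hSsurj z
    rw [hTS, hTS, Submodule.coe_inner, Submodule.coe_inner, hUcoe, hScoe, hScoe, hUcoe]
    rw [hUSinner]
    have : ⟪S0 c, U0 i c'⟫ = ⟪U0 i c', S0 c⟫ := real_inner_comm _ _
    rw [this, hUSinner]
    rw [Finset.sum_comm]
    refine Finset.sum_congr rfl fun a _ => Finset.sum_congr rfl fun b _ => ?_
    rw [show a.1 + b.1 = b.1 + a.1 from add_comm _ _]
    ring
  have hVext : ∀ w w' : V, (∀ c, ⟪S c, w⟫ = ⟪S c, w'⟫) → w = w' := by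
    intro w w' h
    have h0 : ∀ z : V, ⟪z, w - w'⟫ = 0 := by
      intro z
      obtain ⟨c, rfl⟩ := hSsurj z
      rw [inner_sub_right, h, sub_self]
    have := h0 (w - w')
    rw [inner_self_eq_zero, sub_eq_zero] at this
    exact this
  have hcomm : Pairwise (Function.onFun Commute T) := by
    intro i j _
    show T i * T j = T j * T i
    refine LinearMap.ext fun x => ?_
    rw [Module.End.mul_apply, Module.End.mul_apply]
    show T i (T j x) = T j (T i x)
    obtain ⟨c, rfl⟩ := hSsurj x
    apply hVext
    intro c''
    rw [hTS]
    have e1 : ⟪S c'', T i (U j c)⟫ = ⟪T i (S c''), U j c⟫ := (hsym i _ _).symm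
    rw [e1, hTS, hTS]
    have e2 : ⟪S c'', T j (U i c)⟫ = ⟪T j (S c''), U i c⟫ := (hsym j _ _).symm
    rw [e2, hTS]
    rw [Submodule.coe_inner, Submodule.coe_inner, hUcoe, hUcoe, hUcoe, hUcoe]
    rw [hUUinner, hUUinner]
    refine Finset.sum_congr rfl fun a _ => Finset.sum_congr rfl fun b _ => ?_
    congr 1
    abel
  -- vectors uV in V
  have huVmem : ∀ a : Idx n d, u a ∈ V := fun a => Submodule.subset_span ⟨a, rfl⟩
  set uV : Idx n d → V := fun a => ⟨u a, huVmem a⟩ with huV_def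
  have huVd : ∀ b : Idx n (d-1), uV (emb b) = S (fun b' => if b' = b then 1 else 0) := by
    intro b
    apply Subtype.ext
    rw [hScoe, hS0_def, lmap_single]
    rfl
  have hTuV : ∀ (i : Fin n) (b : Idx n (d-1)), T i (uV (emb b)) = uV (shf i b) := by
    intro i b
    rw [huVd, hTS]
    apply Subtype.ext
    rw [hUcoe, hU0_def, lmap_single]
  -- joint eigendecomposition of e
  have htop : (⨆ χ : Fin n → ℝ, ⨅ i, Module.End.eigenspace (T i) (χ i)) = ⊤ :=
    LinearMap.IsSymmetric.iSup_iInf_eq_top_of_commute hsym hcomm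
  set z0 : Idx n (d-1) := ⟨0, by simp⟩ with hz0_def
  set e : V := uV (emb z0) with he_def
  have he_mem : e ∈ ⨆ χ : Fin n → ℝ, ⨅ i, Module.End.eigenspace (T i) (χ i) := by
    rw [htop]; trivial
  obtain ⟨w, hw_mem, hw_sum⟩ := (Submodule.mem_iSup_iff_exists_finsupp _ _).mp he_mem
  -- representation of uV a
  have heig : ∀ (χ : Fin n → ℝ) (i : Fin n), T i (w χ) = χ i • w χ := by
    intro χ i
    have := hw_mem χ
    have h2 : w χ ∈ Module.End.eigenspace (T i) (χ i) :=
      (Submodule.mem_iInf _).mp this i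
    exact Module.End.mem_eigenspace_iff.mp h2
  have hrep : ∀ (m : ℕ) (a : Idx n d), deg a.1 ≤ m →
      uV a = ∑ χ ∈ w.support, mpow χ a.1 • w χ := by
    intro m
    induction m with
    | zero =>
      intro a ha
      have h0 : a.1 = 0 := deg_eq_zero_iff.mp (Nat.le_zero.mp ha)
      have hae : a = emb z0 := Subtype.ext h0
      have hsum2 : ∑ χ ∈ w.support, mpow χ a.1 • w χ = e := by
        rw [← hw_sum, Finsupp.sum]
        refine Finset.sum_congr rfl fun χ _ => ?_
        rw [h0, mpow_zero, one_smul]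
      rw [hsum2, he_def, hae]
    | succ m ih =>
      intro a ha
      by_cases hle : deg a.1 ≤ m
      · exact ih a hle
      · have hpos : deg a.1 ≠ 0 := by omega
        have hex : ∃ i, a.1 i ≠ 0 := by
          by_contra hc
          push_neg at hc
          exact hpos (deg_eq_zero_iff.mpr (by ext j; simpa using hc j))
        obtain ⟨i, hi⟩ := hex
        set β := a.1 - Finsupp.single i 1 with hβ_def
        have hkeyβ : β + Finsupp.single i 1 = a.1 := sub_single_add hi
        have hdegβ : deg β + 1 = deg a.1 := by
          have := deg_add β (Finsupp.single i 1)
          rw [hkeyβ, deg_single] at this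
          omega
        have hβd : deg β ≤ d - 1 := by
          have := a.2
          have h2 : deg a.1 ≤ d := this
          omega
        set b : Idx n (d-1) := ⟨β, hβd⟩ with hb_def
        have hab : a = shf i b := Subtype.ext (by rw [hshf_def]; exact hkeyβ.symm)
        have hembb : deg (emb b).1 ≤ m := by
          show deg β ≤ m
          omega
        rw [hab, ← hTuV, ih (emb b) hembb, map_sum]
        refine Finset.sum_congr rfl fun χ _ => ?_
        rw [_root_.map_smul, heig, smul_smul]
        show (mpow χ β * χ i) • w χ = mpow χ (shf i b).1 • w χ
        rw [hshf_def]
        show (mpow χ β * χ i) • w χ = mpow χ (β + Finsupp.single i 1) • w χ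
        rw [mpow_add, mpow_single]
  -- orthogonality of the eigencomponents
  have horthw : ∀ χ χ' : Fin n → ℝ, χ ≠ χ' → ⟪w χ, w χ'⟫ = (0:ℝ) := by
    intro χ χ' hne
    have hfam := LinearMap.IsSymmetric.orthogonalFamily_iInf_eigenspaces hsym
    exact hfam hne ⟨w χ, hw_mem χ⟩ ⟨w χ', hw_mem χ'⟩
  -- the diagonal expansion of the moment matrix over the support of w
  have hMdiag : ∀ a b : Idx n d,
      momMat n d y a b = ∑ χ ∈ w.support, ⟪w χ, w χ⟫ * (mpow χ a.1 * mpow χ b.1) := by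
    intro a b
    have h1 : momMat n d y a b = ⟪(uV a : EuclideanSpace ℝ (Idx n d)), (uV b : EuclideanSpace ℝ (Idx n d))⟫ := by
      exact (hu a b).symm
    rw [h1, ← Submodule.coe_inner, hrep (deg a.1) a le_rfl, hrep (deg b.1) b le_rfl]
    rw [sum_inner]
    rw [Finset.sum_congr rfl fun χ (hχ : χ ∈ w.support) => inner_sum _ _ _]
    rw [Finset.sum_congr rfl fun χ (hχ : χ ∈ w.support) =>
      Finset.sum_congr rfl fun χ' (hχ' : χ' ∈ w.support) => by
        rw [Submodule.coe_inner, Submodule.coe_smul, Submodule.coe_smul, real_inner_smul_left,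
          real_inner_smul_right, ← Submodule.coe_inner]]
    refine Finset.sum_congr rfl fun χ hχ => ?_
    rw [Finset.sum_eq_single χ]
    · ring
    · intro χ' hχ' hne
      rw [horthw χ χ' (fun h => hne (h.symm))]
      ring
    · intro h
      exact absurd hχ h
  -- assemble the answer
  set s := w.support with hs_def
  refine ⟨s.card, fun k => ⟪w ((s.equivFin.symm k : s) : Fin n → ℝ),
      w ((s.equivFin.symm k : s) : Fin n → ℝ)⟫,
    fun k => ((s.equivFin.symm k : s) : Fin n → ℝ), ?_, ?_⟩
  · intro k
    have hk : ((s.equivFin.symm k : s) : Fin n → ℝ) ∈ s := (s.equivFin.symm k).2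
    have hne : w ((s.equivFin.symm k : s) : Fin n → ℝ) ≠ 0 := by
      exact Finsupp.mem_support_iff.mp hk
    have h1 : (0:ℝ) ≤ ⟪w ((s.equivFin.symm k : s) : Fin n → ℝ),
        w ((s.equivFin.symm k : s) : Fin n → ℝ)⟫ := real_inner_self_nonneg
    have h2 : ⟪w ((s.equivFin.symm k : s) : Fin n → ℝ),
        w ((s.equivFin.symm k : s) : Fin n → ℝ)⟫ ≠ (0:ℝ) := inner_self_ne_zero.mpr hne
    exact lt_of_le_of_ne h1 (Ne.symm h2)
  · ext a b
    rw [hMdiag a b, Matrix.sum_apply]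
    refine Eq.trans ((Finset.sum_coe_sort s _).symm) ?_
    refine Eq.trans ((Equiv.sum_comp s.equivFin.symm _).symm) ?_
    refine Finset.sum_congr rfl fun k _ => ?_
    rw [Matrix.smul_apply, Matrix.vecMulVec_apply, smul_eq_mul]
    rfl

end NDSAux

/-- suppose `f` attains its global infimum and `y` is an optimal solution of
the NDS relaxation `(P_{2d,NDS})` whose moment matrix is flat
(`rank M_d(y) = rank M_{d-1}(y)`).  Then `M_d(y) = Σᵢ λᵢ V_d(aᵢ)V_d(aᵢ)ᵀ` with `λᵢ > 0`,
and if moreover all points `aᵢ` lie in the real gradient variety `V_f`, then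
`P* = P*_{2d,NDS}` and every `aᵢ` is a global minimizer of `f`. -/
theorem nds_optimality_from_flatness (n d : ℕ) (hd : 1 ≤ d) (f : MvPolynomial (Fin n) ℝ)
    (hf : f.totalDegree ≤ 2 * d)
    (hattain : ∃ xs : Fin n → ℝ, ((eval xs f : ℝ) : EReal) = globalOpt n f)
    (y : (Fin n →₀ ℕ) → ℝ) (hfeas : ndsFeasible n (2 * d) f y)
    (hopt : ((riesz y f : ℝ) : EReal) = ndsOpt n (2 * d) f)
    (hflat : (momMat n d y).rank = (momMat n (d - 1) y).rank) :
    ∃ (N : ℕ) (lam : Fin N → ℝ) (a : Fin N → (Fin n → ℝ)),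
      (∀ i, 0 < lam i) ∧
      momMat n d y =
        ∑ i, lam i • Matrix.vecMulVec (monoVec n d (a i)) (monoVec n d (a i)) ∧
      ((∀ i, ∀ j : Fin n, eval (a i) (pderiv j f) = 0) →
        globalOpt n f = ndsOpt n (2 * d) f ∧
        ∀ i, ((eval (a i) f : ℝ) : EReal) = globalOpt n f) := by
  classical
  obtain ⟨hy0, hpsd', hgrad⟩ := hfeas
  have hdd : 2 * d / 2 = d := Nat.mul_div_cancel_left d (by norm_num)
  rw [hdd] at hpsd'
  obtain ⟨N, lam, a, hlam, hM⟩ := NDSAux.flat_decomp n d hd y hpsd' hflat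
  refine ⟨N, lam, a, hlam, hM, ?_⟩
  intro _hgrad_a
  -- representation of y in degrees ≤ 2d
  have hy : ∀ γ : Fin n →₀ ℕ, NDSAux.deg γ ≤ 2*d →
      y γ = ∑ k, lam k * NDSAux.mpow (a k) γ := by
    intro γ hγ
    obtain ⟨α, β, hα, hβ, hsum⟩ := NDSAux.exists_split d (NDSAux.deg γ) γ le_rfl hγ
    have h1 : y γ = momMat n d y ⟨α, hα⟩ ⟨β, hβ⟩ := by
      show y γ = y (α + β)
      rw [hsum]
    rw [h1, hM, Matrix.sum_apply]
    refine Finset.sum_congr rfl fun k _ => ?_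
    rw [Matrix.smul_apply, Matrix.vecMulVec_apply, smul_eq_mul]
    show lam k * (NDSAux.mpow (a k) α * NDSAux.mpow (a k) β) = lam k * NDSAux.mpow (a k) γ
    rw [← NDSAux.mpow_add, hsum]
  have hsupp : ∀ γ ∈ f.support, NDSAux.deg γ ≤ 2*d := by
    intro γ hγ
    rw [NDSAux.deg_eq_sum]
    exact le_trans (MvPolynomial.le_totalDegree hγ) hf
  have hsum1 : ∑ k, lam k = 1 := by
    have h := hy 0 (by simp [NDSAux.deg])
    rw [hy0] at h
    have h2 : ∑ k, lam k * NDSAux.mpow (a k) 0 = ∑ k, lam k :=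
      Finset.sum_congr rfl fun k _ => by rw [NDSAux.mpow_zero, mul_one]
    rw [h2] at h
    exact h.symm
  have hries : riesz y f = ∑ k, lam k * eval (a k) f := by
    have h1 : riesz y f = ∑ γ ∈ f.support, ∑ k, f.coeff γ * (lam k * NDSAux.mpow (a k) γ) := by
      rw [riesz]
      refine Finset.sum_congr rfl fun γ hγ => ?_
      rw [hy γ (hsupp γ hγ), Finset.mul_sum]
    rw [h1, Finset.sum_comm]
    refine Finset.sum_congr rfl fun k _ => ?_
    rw [eval_eq', Finset.mul_sum]
    refine Finset.sum_congr rfl fun γ _ => ?_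
    ring
  -- the global minimizer
  obtain ⟨xs, hxs⟩ := hattain
  have hminreal : ∀ z, eval xs f ≤ eval z f := by
    intro z
    have hz : ((eval z f : ℝ) : EReal) ∈ {v : EReal | ∃ x : Fin n → ℝ, v = (eval x f : ℝ)} :=
      ⟨z, rfl⟩
    have h2 : globalOpt n f ≤ ((eval z f : ℝ) : EReal) := sInf_le hz
    rw [← hxs] at h2
    exact EReal.coe_le_coe_iff.mp h2
  -- the Dirac solution at the minimizer is NDS-feasible
  have hfeasδ : ndsFeasible n (2*d) f (fun γ => NDSAux.mpow xs γ) := by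
    refine ⟨by simp [NDSAux.mpow], ?_, ?_⟩
    · rw [hdd]
      exact NDSAux.dirac_psd n d xs
    · intro i g _
      rw [NDSAux.riesz_dirac, _root_.map_mul,
        NDSAux.pderiv_eval_eq_zero_of_min f xs hminreal i, mul_zero]
  have hle1 : ndsOpt n (2*d) f ≤ ((eval xs f : ℝ) : EReal) := by
    have hmem : ((riesz (fun γ => NDSAux.mpow xs γ) f : ℝ) : EReal)
        ∈ {v : EReal | ∃ y, ndsFeasible n (2*d) f y ∧ v = (riesz y f : ℝ)} :=
      ⟨fun γ => NDSAux.mpow xs γ, hfeasδ, rfl⟩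
    have h2 : ndsOpt n (2*d) f ≤ _ := sInf_le hmem
    rwa [NDSAux.riesz_dirac] at h2
  have hge : ((eval xs f : ℝ) : EReal) ≤ ndsOpt n (2*d) f := by
    rw [← hopt]
    apply EReal.coe_le_coe_iff.mpr
    rw [hries]
    calc eval xs f = ∑ k, lam k * eval xs f := by rw [← Finset.sum_mul, hsum1, one_mul]
    _ ≤ ∑ k, lam k * eval (a k) f :=
      Finset.sum_le_sum fun k _ =>
        mul_le_mul_of_nonneg_left (hminreal (a k)) (le_of_lt (hlam k))
  have heq : ((eval xs f : ℝ) : EReal) = ndsOpt n (2*d) f := le_antisymm hge hle1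
  have hsumeq : ∑ k, lam k * eval (a k) f = eval xs f := by
    have h2 : ((riesz y f : ℝ) : EReal) = ((eval xs f : ℝ) : EReal) := by rw [hopt, ← heq]
    have h3 : riesz y f = eval xs f := EReal.coe_eq_coe_iff.mp h2
    rw [← hries, h3]
  have hterm : ∀ k, eval (a k) f = eval xs f := by
    by_contra hc
    push_neg at hc
    obtain ⟨k0, hk0⟩ := hc
    have hstrict : eval xs f < eval (a k0) f := lt_of_le_of_ne (hminreal _) (Ne.symm hk0)
    have hlt : ∑ k, lam k * eval xs f < ∑ k, lam k * eval (a k) f := by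
      refine Finset.sum_lt_sum
        (fun k _ => mul_le_mul_of_nonneg_left (hminreal _) (hlam k).le)
        ⟨k0, Finset.mem_univ _, ?_⟩
      exact mul_lt_mul_of_pos_left hstrict (hlam k0)
    rw [← Finset.sum_mul, hsum1, one_mul, hsumeq] at hlt
    exact lt_irrefl _ hlt
  constructor
  · rw [← hxs, heq]
  · intro k
    rw [hterm k, hxs]
end
end

section
/- The Motzkin polynomial is not a sum of squares of polynomials: there exist no m ∈ ℕ and polynomials p₁,…,p_m ∈ ℝ[X,Y] such that X⁴Y² + X²Y⁴ − 3X²Y² + 1 = Σᵢ₌₁ᵐ pᵢ². -/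
/-!
Suppose the Motzkin polynomial `f` were `∑ pᵢ²`. For any monomial order the leading terms of
the `pᵢ²` have positive leading coefficients and cannot cancel, so `2 deg pᵢ ≤ deg f`; with
`degLex` this gives `deg pᵢ ≤ 3`. Setting one variable to zero turns `f` into `1`, so the
same argument shows that no `pᵢ` contains a pure power of `X` or of `Y`. Hence the only monomials
of `pᵢ` are `1, XY, X²Y, XY²`, so the coefficient of `X²Y²` in `∑ pᵢ²` is the sum of the squared
coefficients of `XY` in the `pᵢ`, which is `≥ 0`, whereas in `f` it is `-3`.
-/

open MvPolynomial
open scoped MonomialOrder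

open Finset in
theorem MonomialOrder.degree_add_degree_le_degree_sum_sq {σ R ι : Type*} [CommRing R]
    [LinearOrder R] [IsStrictOrderedRing R] [Fintype ι] (m : MonomialOrder σ)
    (p : ι → MvPolynomial σ R) (i : ι) :
    m.degree (p i) + m.degree (p i) ≼[m] m.degree (∑ j, p j ^ 2) := by
  obtain ⟨j, -, hj⟩ := exists_max_image univ (fun j ↦ m.toSyn (m.degree (p j))) ⟨i, mem_univ i⟩
  set D := m.degree (p j)
  have hle k : m.degree (p k) ≼[m] D := hj k (mem_univ k)
  calc m.toSyn (m.degree (p i) + m.degree (p i))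
      ≤ m.toSyn (D + D) := by rw [map_add, map_add]; exact add_le_add (hle i) (hle i)
    _ ≤ m.toSyn (m.degree (∑ k, p k ^ 2)) := by
      by_cases hpj : p j = 0
      · simp [D, hpj, m.zero_le]
      have hcoeff : coeff (D + D) (∑ k, p k ^ 2) = ∑ k, coeff D (p k) ^ 2 := by
        rw [coeff_sum]
        refine sum_congr rfl fun k _ ↦ ?_
        rw [sq, sq, m.coeff_mul_of_add_of_degree_le (hle k) (hle k)]
      have hpos : 0 < coeff (D + D) (∑ k, p k ^ 2) := by
        rw [hcoeff]
        refine (sq_pos_of_ne_zero (m.coeff_degree_ne_zero_iff.mpr hpj)).trans_le ?_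
        exact single_le_sum (fun k _ ↦ sq_nonneg (coeff D (p k))) (mem_univ j)
      exact m.le_degree (mem_support_iff.mpr hpos.ne')

theorem MvPolynomial.two_mul_totalDegree_le_totalDegree_sum_sq {σ R ι : Type*} [CommRing R]
    [LinearOrder R] [IsStrictOrderedRing R] [Fintype ι] (p : ι → MvPolynomial σ R) (i : ι) :
    2 * (p i).totalDegree ≤ (∑ j, p j ^ 2).totalDegree := by
  -- `degLex` needs `>` to be well founded on the variables: reverse a well-ordering.
  let _ : LinearOrder σ := IsWellOrder.linearOrder WellOrderingRel
  have _ : WellFoundedLT σ := ⟨WellOrderingRel.isWellOrder.wf⟩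
  let _ : LinearOrder σ := (inferInstance : LinearOrder σᵒᵈ)
  have _ : WellFoundedGT σ := (inferInstance : WellFoundedGT σᵒᵈᵒᵈ)
  have h := MonomialOrder.degLex.degree_add_degree_le_degree_sum_sq p i
  rw [MonomialOrder.degLex_le_iff] at h
  simpa [map_add, degree_degLexDegree, two_mul] using Finsupp.DegLex.monotone_degree h

theorem MvPolynomial.coeff_mapDomain_eq_zero_of_totalDegree_killCompl_eq_zero
    {σ τ R : Type*} [CommSemiring R] {f : τ → σ} (hf : Function.Injective f)
    {p : MvPolynomial σ R} (hp : (killCompl hf p).totalDegree = 0) {s : τ →₀ ℕ} (hs : s ≠ 0) :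
    coeff (s.mapDomain f) p = 0 := by
  classical
  rw [← coeff_killCompl hf, totalDegree_eq_zero_iff_eq_C.mp hp, coeff_C, if_neg hs.symm]

theorem MvPolynomial.coeff_add_self_sq_eq_sq_coeff {σ R : Type*} [CommSemiring R]
    {p : MvPolynomial σ R} {h : σ →₀ ℕ}
    (hp : ∀ a b, a + b = h + h → a ≠ h → coeff a p * coeff b p = 0) :
    coeff (h + h) (p ^ 2) = coeff h p ^ 2 := by
  classical
  rw [sq, sq, coeff_mul, Finset.sum_eq_single (h, h)]
  · rintro ⟨a, b⟩ hab hne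
    refine hp a b (Finset.HasAntidiagonal.mem_antidiagonal.mp hab) fun ha ↦ hne ?_
    subst ha
    simpa using Finset.HasAntidiagonal.mem_antidiagonal.mp hab
  · simp

noncomputable def motzkin (R : Type*) [CommRing R] : MvPolynomial (Fin 2) R :=
  X 0 ^ 4 * X 1 ^ 2 + X 0 ^ 2 * X 1 ^ 4 - 3 * X 0 ^ 2 * X 1 ^ 2 + 1

section Motzkin

open Finsupp

variable {R : Type*} [CommRing R]

theorem totalDegree_motzkin_le : (motzkin R).totalDegree ≤ 6 := by
  have hmon (a b : ℕ) : ((X 0 : MvPolynomial (Fin 2) R) ^ a * X 1 ^ b).totalDegree ≤ a + b := by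
    rw [X_pow_eq_monomial, X_pow_eq_monomial, monomial_mul, one_mul]
    exact (totalDegree_monomial_le _ _).trans (by simp [sum_add_index])
  have h3 : (3 * X 0 ^ 2 * X 1 ^ 2 : MvPolynomial (Fin 2) R).totalDegree ≤ 6 := by
    rw [mul_assoc, ← map_ofNat C 3]
    grw [totalDegree_mul, totalDegree_C, hmon]
    norm_num
  unfold motzkin
  grw [totalDegree_add, totalDegree_sub, totalDegree_add, hmon, hmon, h3]
  simp

theorem killCompl_motzkin (j : Fin 2) :
    killCompl (Function.injective_of_subsingleton fun _ : Unit ↦ j) (motzkin R) = 1 := by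
  fin_cases j <;> simp [motzkin, killCompl]

theorem coeff_motzkin_single_two_add_single_two :
    coeff (single 0 2 + single 1 2) (motzkin R) = -3 := by
  simp [motzkin, X_pow_eq_monomial, monomial_mul, coeff_monomial, Finsupp.ext_iff,
    Fin.forall_fin_two, coeff_one, ← map_ofNat C]

theorem coeff_eq_zero_of_apply_eq_zero {p : MvPolynomial (Fin 2) R}
    (haxis : ∀ j k, k ≠ 0 → coeff (single j k) p = 0) {a : Fin 2 →₀ ℕ} (ha : a ≠ 0)
    (hzero : a 0 = 0 ∨ a 1 = 0) : coeff a p = 0 := by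
  obtain ⟨j, hj⟩ : ∃ j, a = single j (a j) := by
    rcases hzero with h | h
    · exact ⟨1, by ext i; fin_cases i <;> simp [h]⟩
    · exact ⟨0, by ext i; fin_cases i <;> simp [h]⟩
  rw [hj] at ha ⊢
  exact haxis j _ (by simpa using ha)

theorem coeff_sq_single_two_add_single_two {p : MvPolynomial (Fin 2) R}
    (hdeg : p.totalDegree ≤ 3) (haxis : ∀ j k, k ≠ 0 → coeff (single j k) p = 0) :
    coeff (single 0 2 + single 1 2) (p ^ 2) = coeff (single 0 1 + single 1 1) p ^ 2 := by
  have hbig (c : Fin 2 →₀ ℕ) (hc : 3 < c 0 + c 1) : coeff c p = 0 := by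
    refine coeff_eq_zero_of_totalDegree_lt ?_
    rw [← degree_apply, degree_eq_sum, Fin.sum_univ_two]
    omega
  rw [show single (0 : Fin 2) 2 + single 1 2 = (single 0 1 + single 1 1) + (single 0 1 + single 1 1)
    by ext i; fin_cases i <;> simp]
  refine coeff_add_self_sq_eq_sq_coeff fun a b hab ha ↦ ?_
  have h0 : a 0 + b 0 = 2 := by simpa using DFunLike.congr_fun hab 0
  have h1 : a 1 + b 1 = 2 := by simpa using DFunLike.congr_fun hab 1
  by_cases ha' : a 0 = 0 ∨ a 1 = 0
  · by_cases ha0 : a = 0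
    · rw [hbig b (by simp [ha0] at h0 h1; omega), mul_zero]
    · rw [coeff_eq_zero_of_apply_eq_zero haxis ha0 ha', zero_mul]
  by_cases hb' : b 0 = 0 ∨ b 1 = 0
  · by_cases hb0 : b = 0
    · rw [hbig a (by simp [hb0] at h0 h1; omega), zero_mul]
    · rw [coeff_eq_zero_of_apply_eq_zero haxis hb0 hb', mul_zero]
  exact absurd (by ext i; fin_cases i <;> simp <;> omega) ha

theorem motzkin_ne_sum_sq [LinearOrder R] [IsStrictOrderedRing R] {ι : Type*} [Fintype ι]
    (p : ι → MvPolynomial (Fin 2) R) : motzkin R ≠ ∑ i, p i ^ 2 := by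
  intro h
  have hdeg i : (p i).totalDegree ≤ 3 := by
    have := two_mul_totalDegree_le_totalDegree_sum_sq p i
    have := h ▸ totalDegree_motzkin_le (R := R)
    omega
  have haxis i j k (hk : k ≠ 0) : coeff (single j k) (p i) = 0 := by
    have hf := Function.injective_of_subsingleton fun _ : Unit ↦ j
    have hrestrict := two_mul_totalDegree_le_totalDegree_sum_sq (fun i ↦ killCompl hf (p i)) i
    simp only [← map_pow, ← map_sum, ← h, killCompl_motzkin, totalDegree_one] at hrestrict
    simpa using coeff_mapDomain_eq_zero_of_totalDegree_killCompl_eq_zero hf (by omega)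
      (single_ne_zero.mpr hk : single () k ≠ 0)
  have hcoeff : (-3 : R) = ∑ i, coeff (single 0 1 + single 1 1) (p i) ^ 2 := by
    rw [← coeff_motzkin_single_two_add_single_two, h, coeff_sum]
    exact Finset.sum_congr rfl fun i _ ↦ coeff_sq_single_two_add_single_two (hdeg i) (haxis i)
  have hnonneg : 0 ≤ ∑ i, coeff (single 0 1 + single 1 1) (p i) ^ 2 :=
    Finset.sum_nonneg fun i _ ↦ sq_nonneg _
  linarith

end Motzkin

/-- the Motzkin polynomial `X⁴Y² + X²Y⁴ − 3X²Y² + 1` is not a sum of squares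
of real polynomials. -/
theorem motzkin_not_sum_of_squares :
    ¬ ∃ (m : ℕ) (p : Fin m → MvPolynomial (Fin 2) ℝ),
      (X 0 : MvPolynomial (Fin 2) ℝ) ^ 4 * X 1 ^ 2 + X 0 ^ 2 * X 1 ^ 4
          - 3 * X 0 ^ 2 * X 1 ^ 2 + 1 = ∑ i, p i ^ 2 := by
  rintro ⟨m, p, h⟩
  exact motzkin_ne_sum_sq p h
end

section
/- The Robinson polynomial is nonnegative on ℝ²: for all x, y ∈ ℝ, x⁶ + y⁶ + 1 − (x⁴y² + x²y⁴ + x⁴ + y⁴ + x² + y²) + 3x²y² ≥ 0. Moreover it vanishes at the eight points (±1, ±1), (±1, 0), (0, ±1), so its global infimum over ℝ² equals 0 and these points are global minimizers. -/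
/-!
Substituting `a = x²`, `b = y²`, `c = 1`, the Robinson polynomial becomes the Schur form
`a(a-b)(a-c) + b(b-a)(b-c) + c(c-a)(c-b)`, which is nonnegative for `a, b, c ≥ 0` by Schur's
inequality. The value `0` is attained, e.g. at `(1, 0)`, so it is the infimum.
-/

section Schur

variable {R : Type*} [CommRing R]

def schur (a b c : R) : R :=
  a * (a - b) * (a - c) + b * (b - a) * (b - c) + c * (c - a) * (c - b)

theorem schur_rotate (a b c : R) : schur a b c = schur b c a := by
  unfold schur; ring

theorem robinson_eq_schur (x y : R) :
    x ^ 6 + y ^ 6 + 1 - (x ^ 4 * y ^ 2 + x ^ 2 * y ^ 4 + x ^ 4 + y ^ 4 + x ^ 2 + y ^ 2)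
      + 3 * x ^ 2 * y ^ 2 = schur (x ^ 2) (y ^ 2) 1 := by
  unfold schur; ring

variable [LinearOrder R] [IsStrictOrderedRing R]

theorem schur_nonneg_of_le_of_le {a b c : R} (hc : 0 ≤ c) (hca : c ≤ a) (hcb : c ≤ b) :
    0 ≤ schur a b c := by
  have key : schur a b c = (a - b) ^ 2 * (a + b - c) + c * (a - c) * (b - c) := by
    unfold schur; ring
  rw [key]
  have hsq : 0 ≤ (a - b) ^ 2 * (a + b - c) := mul_nonneg (sq_nonneg _) (by linarith)
  have hmin : 0 ≤ c * (a - c) * (b - c) :=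
    mul_nonneg (mul_nonneg hc (sub_nonneg.2 hca)) (sub_nonneg.2 hcb)
  exact add_nonneg hsq hmin

theorem schur_nonneg {a b c : R} (ha : 0 ≤ a) (hb : 0 ≤ b) (hc : 0 ≤ c) :
    0 ≤ schur a b c := by
  rcases le_total a b with hab | hba
  · rcases le_total a c with hac | hca
    · rw [schur_rotate]; exact schur_nonneg_of_le_of_le ha hab hac
    · exact schur_nonneg_of_le_of_le hc hca (hca.trans hab)
  · rcases le_total b c with hbc | hcb
    · rw [schur_rotate, schur_rotate]; exact schur_nonneg_of_le_of_le hb hbc hba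
    · exact schur_nonneg_of_le_of_le hc (hcb.trans hba) hcb

end Schur

/-- the Robinson polynomial
`x⁶ + y⁶ + 1 − (x⁴y² + x²y⁴ + x⁴ + y⁴ + x² + y²) + 3x²y²` is nonnegative on `ℝ²`, vanishes
at the eight points `(±1, ±1), (±1, 0), (0, ±1)`, and its global infimum over `ℝ²` equals
`0`, attained at these points. -/
theorem robinson_nonneg_and_inf_zero :
    (∀ x y : ℝ, 0 ≤ x ^ 6 + y ^ 6 + 1
        - (x ^ 4 * y ^ 2 + x ^ 2 * y ^ 4 + x ^ 4 + y ^ 4 + x ^ 2 + y ^ 2)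
        + 3 * x ^ 2 * y ^ 2) ∧
    (∀ x y : ℝ,
      (((x = 1 ∨ x = -1) ∧ (y = 1 ∨ y = -1)) ∨ ((x = 1 ∨ x = -1) ∧ y = 0) ∨
        (x = 0 ∧ (y = 1 ∨ y = -1))) →
      x ^ 6 + y ^ 6 + 1
        - (x ^ 4 * y ^ 2 + x ^ 2 * y ^ 4 + x ^ 4 + y ^ 4 + x ^ 2 + y ^ 2)
        + 3 * x ^ 2 * y ^ 2 = 0) ∧
    IsGLB {v : ℝ | ∃ x y : ℝ, v = x ^ 6 + y ^ 6 + 1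
        - (x ^ 4 * y ^ 2 + x ^ 2 * y ^ 4 + x ^ 4 + y ^ 4 + x ^ 2 + y ^ 2)
        + 3 * x ^ 2 * y ^ 2} 0 := by
  have nonneg : ∀ x y : ℝ, 0 ≤ x ^ 6 + y ^ 6 + 1
      - (x ^ 4 * y ^ 2 + x ^ 2 * y ^ 4 + x ^ 4 + y ^ 4 + x ^ 2 + y ^ 2)
      + 3 * x ^ 2 * y ^ 2 := fun x y => by
    rw [robinson_eq_schur]; exact schur_nonneg (sq_nonneg x) (sq_nonneg y) zero_le_one
  refine ⟨nonneg, ?_, IsLeast.isGLB ⟨⟨1, 0, by norm_num⟩, ?_⟩⟩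
  · rintro x y (⟨rfl | rfl, rfl | rfl⟩ | ⟨rfl | rfl, rfl⟩ | ⟨rfl, rfl | rfl⟩) <;> norm_num
  · rintro v ⟨x, y, rfl⟩
    exact nonneg x y
end
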